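/- arXiv:2105.09896 — 4 statements merged into one kernel-verified Lean document; each statement's English description precedes it below -/
import Mathlib

section
/- Let p ∈ (0,1). Then σ(Δ^(0)) = {0, 2}, and for every n ≥ 1, σ(Δ^(n)__p) = {0, 2} ∪ ⋃_{i=0}^{n−1} (R_{Δ_p}^{∘i})^{−1}({p, 2−p}), where R_{Δ_p}^{∘i} denotes the i-fold composition of R_{Δ_p} and the preimages are taken in ℂ. -/
open MeasureTheory Filter Matrix Polynomial

noncomputable section

/-- `resid x` is the residue mod 3 of `x` after dividing out the largest power of 3. -/
def resid (x : ℕ) : ℕ := (x / 3 ^ (x.factorization 3)) % 3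

/-- The transition probabilities `p(x,y)` of the self-similar `p`-Laplacian:
`p(0,1) = 1`; for `x ≥ 1`, `(p(x,x−1), p(x,x+1)) = (1−p, p)` if `3^{−m(x)} x ≡ 1 (mod 3)`
and `(p, 1−p)` if `3^{−m(x)} x ≡ 2 (mod 3)`; `p(x,y) = 0` if `|x−y| ≠ 1`. -/
def hop (p : ℝ) (x y : ℕ) : ℝ :=
  if y = x + 1 then (if x = 0 then 1 else if resid x = 1 then p else 1 - p)
  else if x = y + 1 then (if resid x = 1 then 1 - p else p)
  else 0

/-- The self-similar Laplacian `Δ_p` acting on sequences `f : ℤ₊ → ℂ`. -/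
def lap (p : ℝ) (f : ℕ → ℂ) : ℕ → ℂ := fun x =>
  if x = 0 then f 0 - f 1
  else f x - (hop p x (x - 1) : ℂ) * f (x - 1) - (hop p x (x + 1) : ℂ) * f (x + 1)

/-- The self-similar almost Mathieu operator `H_{p,β,α,θ}` acting on sequences. -/
def ham (p β α θ : ℝ) (f : ℕ → ℂ) : ℕ → ℂ := fun x =>
  if x = 0 then ((β * Real.cos θ : ℝ) : ℂ) * f 0 - f 1
  else ((β * Real.cos (2 * Real.pi * α * (x : ℝ) + θ) : ℝ) : ℂ) * f x
      - (hop p x (x - 1) : ℂ) * f (x - 1) - (hop p x (x + 1) : ℂ) * f (x + 1)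

/-- The level-`l` Laplacian `Δ^(l)_p` as a `(3^l+1) × (3^l+1)` matrix (complex entries). -/
def lapMatrix (p : ℝ) (l : ℕ) : Matrix (Fin (3 ^ l + 1)) (Fin (3 ^ l + 1)) ℂ :=
  Matrix.of fun i j =>
    if (i : ℕ) = 0 then (if (j : ℕ) = 0 then 1 else if (j : ℕ) = 1 then -1 else 0)
    else if (i : ℕ) = 3 ^ l then
      (if (j : ℕ) = 3 ^ l then 1 else if (j : ℕ) + 1 = 3 ^ l then -1 else 0)
    else if (j : ℕ) = (i : ℕ) then 1
    else if (j : ℕ) + 1 = (i : ℕ) then -(hop p i (i - 1) : ℂ)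
    else if (j : ℕ) = (i : ℕ) + 1 then -(hop p i (i + 1) : ℂ)
    else 0

/-- The level-`l` almost Mathieu operator `H^(l)_{p,β,α,θ}` as a `(3^l+1) × (3^l+1)` matrix. -/
def hamMatrix (p β α θ : ℝ) (l : ℕ) : Matrix (Fin (3 ^ l + 1)) (Fin (3 ^ l + 1)) ℂ :=
  Matrix.of fun i j =>
    if (i : ℕ) = 0 then
      (if (j : ℕ) = 0 then ((β * Real.cos θ : ℝ) : ℂ) else if (j : ℕ) = 1 then -1 else 0)
    else if (i : ℕ) = 3 ^ l then
      (if (j : ℕ) = 3 ^ l then ((β * Real.cos (2 * Real.pi * α * ((3 ^ l : ℕ) : ℝ) + θ) : ℝ) : ℂ)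
       else if (j : ℕ) + 1 = 3 ^ l then -1 else 0)
    else if (j : ℕ) = (i : ℕ) then ((β * Real.cos (2 * Real.pi * α * ((i : ℕ) : ℝ) + θ) : ℝ) : ℂ)
    else if (j : ℕ) + 1 = (i : ℕ) then -(hop p i (i - 1) : ℂ)
    else if (j : ℕ) = (i : ℕ) + 1 then -(hop p i (i + 1) : ℂ)
    else 0

/-- The set of eigenvalues (in ℂ) of a complex square matrix. -/
def matSpec {n : ℕ} (M : Matrix (Fin n) (Fin n) ℂ) : Set ℂ :=
  {z | ∃ v : Fin n → ℂ, v ≠ 0 ∧ M.mulVec v = z • v}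

/-- The spectral decimation function `R_{Δ_p}(z) = z(z+p−2)(z−p−1)/(p(1−p))`. -/
def Rlap (p : ℝ) (z : ℂ) : ℂ := z * (z + (p : ℂ) - 2) * (z - (p : ℂ) - 1) / ((p : ℂ) * (1 - (p : ℂ)))

/-- The spectral decimation function `R_{p,β,k/3,0}` of the level-1 self-similar AMO. -/
def Ramo (p β : ℝ) (z : ℂ) : ℂ :=
  (-(β : ℂ) + 2 * (p : ℂ) - 2 * z) *
    ((β : ℂ) ^ 2 + 2 * (β : ℂ) * (p : ℂ) + (β : ℂ) * z - 2 * (p : ℂ) * z - 2 * (p : ℂ)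
      - 2 * z ^ 2 + 2) / (4 * (p : ℂ) * (1 - (p : ℂ)))

/-- Real version of `Ramo`. -/
def RamoR (p β z : ℝ) : ℝ :=
  (-β + 2 * p - 2 * z) * (β ^ 2 + 2 * β * p + β * z - 2 * p * z - 2 * p - 2 * z ^ 2 + 2) /
    (4 * p * (1 - p))

/-- The function `φ(z) = 4p(p−1)/(4p² − (β+2z)²)`. -/
def phiFun (p β : ℝ) (z : ℂ) : ℂ :=
  4 * (p : ℂ) * ((p : ℂ) - 1) / (4 * (p : ℂ) ^ 2 - ((β : ℂ) + 2 * z) ^ 2)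

/-- The function `ψ(z) = −(β² + 2βp + βz − 2pz − 2p − 2z² + 2)/(β + 2p + 2z)`. -/
def psiFun (p β : ℝ) (z : ℂ) : ℂ :=
  -((β : ℂ) ^ 2 + 2 * (β : ℂ) * (p : ℂ) + (β : ℂ) * z - 2 * (p : ℂ) * z - 2 * (p : ℂ)
      - 2 * z ^ 2 + 2) / ((β : ℂ) + 2 * (p : ℂ) + 2 * z)

/-- The weighted measure on `ℕ` associated with a weight `w`, giving `{x}` mass `w x`. -/
def wMeasure (w : ℕ → ℝ) : Measure ℕ :=
  Measure.sum fun x => (ENNReal.ofReal (w x)) • Measure.dirac x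

/-- Membership in the weighted `ℓ²`-space `ℓ²(ℤ₊, dπ)`. -/
def MemL2 (w : ℕ → ℝ) (f : ℕ → ℂ) : Prop := Summable fun x => ‖f x‖ ^ 2 * w x

section SpectralDecimationProof


lemma resid_3k1 (k : ℕ) : resid (3*k+1) = 1 := by
  unfold resid
  have h : (3*k+1).factorization 3 = 0 := by
    apply Nat.factorization_eq_zero_of_not_dvd
    omega
  rw [h]
  simp [Nat.pow_zero]

lemma resid_3k2 (k : ℕ) : resid (3*k+2) = 2 := by
  unfold resid
  have h : (3*k+2).factorization 3 = 0 := by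
    apply Nat.factorization_eq_zero_of_not_dvd
    omega
  rw [h]
  simp [Nat.pow_zero]

lemma resid_3k (k : ℕ) (hk : k ≠ 0) : resid (3*k) = resid k := by
  unfold resid
  have h : (3*k).factorization 3 = k.factorization 3 + 1 := by
    rw [Nat.factorization_mul (by norm_num) hk]
    simp [Nat.Prime.factorization (by norm_num : Nat.Prime 3)]
    ring
  rw [h, pow_succ]
  rw [show 3 ^ k.factorization 3 * 3 = 3 * 3 ^ k.factorization 3 by ring]
  rw [Nat.mul_div_mul_left _ _ (by norm_num)]

lemma resid_mem (k : ℕ) (hk : k ≠ 0) : resid k = 1 ∨ resid k = 2 := by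
  have h1 : ¬ (3 ∣ k / 3 ^ (k.factorization 3)) := by
    have := Nat.not_dvd_ordCompl (p := 3) (by norm_num) hk
    exact this
  have h2 : k / 3 ^ (k.factorization 3) ≠ 0 := by
    have := Nat.ordCompl_pos (p := 3) hk
    omega
  unfold resid
  omega

variable {p : ℝ}

lemma hop_3k1_left (k : ℕ) : hop p (3*k+1) (3*k) = 1 - p := by
  unfold hop
  rw [if_neg (by omega), if_pos (by omega), resid_3k1]
  simp

lemma hop_3k1_right (k : ℕ) : hop p (3*k+1) (3*k+2) = p := by
  unfold hop
  rw [if_pos (by omega), if_neg (by omega), resid_3k1]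
  simp

lemma hop_3k2_left (k : ℕ) : hop p (3*k+2) (3*k+1) = p := by
  unfold hop
  rw [if_neg (by omega), if_pos (by omega), resid_3k2]
  simp

lemma hop_3k2_right (k : ℕ) : hop p (3*k+2) (3*k+3) = 1 - p := by
  unfold hop
  rw [if_pos (by omega), if_neg (by omega), resid_3k2]
  simp

lemma hop_3k_left (k : ℕ) (hk : k ≠ 0) : hop p (3*k) (3*k-1) = hop p k (k-1) := by
  unfold hop
  rw [resid_3k k hk]
  split_ifs <;> first | rfl | omega

lemma hop_3k_right (k : ℕ) (hk : k ≠ 0) : hop p (3*k) (3*k+1) = hop p k (k+1) := by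
  unfold hop
  rw [resid_3k k hk]
  split_ifs <;> first | rfl | omega

lemma hop_sum (k : ℕ) (hk : k ≠ 0) : hop p k (k-1) + hop p k (k+1) = 1 := by
  unfold hop
  rw [if_neg (by omega), if_pos (by omega), if_pos rfl, if_neg hk]
  split <;> ring

lemma hop_left_pos (hp : 0 < p) (hp1 : p < 1) (k : ℕ) (hk : k ≠ 0) : 0 < hop p k (k-1) := by
  unfold hop
  rw [if_neg (by omega), if_pos (by omega)]
  split <;> linarith

lemma hop_right_pos (hp : 0 < p) (hp1 : p < 1) (k : ℕ) (hk : k ≠ 0) : 0 < hop p k (k+1) := by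
  unfold hop
  rw [if_pos rfl, if_neg hk]
  split <;> linarith

lemma hop_half (k : ℕ) (hk : k ≠ 0) : hop (1/2) k (k-1) = 1/2 ∧ hop (1/2) k (k+1) = 1/2 := by
  unfold hop
  rw [if_neg (by omega), if_pos (by omega), if_pos rfl, if_neg hk]
  constructor <;> split <;> norm_num

/-! ### Step A: matSpec as a sequence-space eigenvalue problem -/

def IsEig (p : ℝ) (N : ℕ) (z : ℂ) : Prop :=
  ∃ f : ℕ → ℂ,
    (∃ x, x ≤ N ∧ f x ≠ 0) ∧
    f 0 - f 1 = z * f 0 ∧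
    (∀ x, 0 < x → x < N →
      f x - (hop p x (x-1) : ℂ) * f (x-1) - (hop p x (x+1) : ℂ) * f (x+1) = z * f x) ∧
    f N - f (N-1) = z * f N

lemma sum_if_two' {m : ℕ} (a b : ℕ) (ha : a < m) (hb : b < m) (hab : a ≠ b)
    (x y : ℂ) (v : Fin m → ℂ) :
    (∑ j : Fin m, (if (j:ℕ) = a then x else if (j:ℕ) = b then y else 0) * v j)
      = x * v ⟨a, ha⟩ + y * v ⟨b, hb⟩ := by
  have h : ∀ j : Fin m, (if (j:ℕ) = a then x else if (j:ℕ) = b then y else 0) * v j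
      = (if j = ⟨a, ha⟩ then x * v j else 0) + (if j = ⟨b, hb⟩ then y * v j else 0) := by
    intro j
    rcases eq_or_ne (j:ℕ) a with h1 | h1
    · have hj : j = ⟨a, ha⟩ := Fin.ext h1
      subst hj; simp [Fin.ext_iff, hab]
    · rcases eq_or_ne (j:ℕ) b with h2 | h2
      · have hj : j = ⟨b, hb⟩ := Fin.ext h2
        subst hj; simp [Fin.ext_iff, h1]
      · simp [Fin.ext_iff, h1, h2]
  rw [Finset.sum_congr rfl fun j _ => h j, Finset.sum_add_distrib]
  simp [Finset.sum_ite_eq']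

lemma sum_if_three' {m : ℕ} (a b c : ℕ) (ha : a < m) (hb : b < m) (hc : c < m)
    (hab : a ≠ b) (hac : a ≠ c) (hbc : b ≠ c) (x y w : ℂ) (v : Fin m → ℂ) :
    (∑ j : Fin m, (if (j:ℕ) = a then x else if (j:ℕ) = b then y
        else if (j:ℕ) = c then w else 0) * v j)
      = x * v ⟨a, ha⟩ + y * v ⟨b, hb⟩ + w * v ⟨c, hc⟩ := by
  have h : ∀ j : Fin m, (if (j:ℕ) = a then x else if (j:ℕ) = b then y
        else if (j:ℕ) = c then w else 0) * v j
      = (if j = ⟨a, ha⟩ then x * v j else 0) + (if j = ⟨b, hb⟩ then y * v j else 0)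
        + (if j = ⟨c, hc⟩ then w * v j else 0) := by
    intro j
    rcases eq_or_ne (j:ℕ) a with h1 | h1
    · have hj : j = ⟨a, ha⟩ := Fin.ext h1
      subst hj; simp [Fin.ext_iff, hab, hac]
    · rcases eq_or_ne (j:ℕ) b with h2 | h2
      · have hj : j = ⟨b, hb⟩ := Fin.ext h2
        subst hj; simp [Fin.ext_iff, h1, hbc]
      · rcases eq_or_ne (j:ℕ) c with h3 | h3
        · have hj : j = ⟨c, hc⟩ := Fin.ext h3
          subst hj; simp [Fin.ext_iff, h1, h2]
        · simp [Fin.ext_iff, h1, h2, h3]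
  rw [Finset.sum_congr rfl fun j _ => h j, Finset.sum_add_distrib, Finset.sum_add_distrib]
  simp [Finset.sum_ite_eq']

lemma pow3_pos (n : ℕ) : 1 ≤ 3 ^ n := Nat.one_le_pow _ _ (by norm_num)

lemma mulVec_zero_row (p : ℝ) (n : ℕ) (v : Fin (3^n+1) → ℂ) (i : Fin (3^n+1))
    (hi : (i:ℕ) = 0) :
    (lapMatrix p n).mulVec v i
      = v ⟨0, by omega⟩ - v ⟨1, by have := pow3_pos n; omega⟩ := by
  have key : ∀ j : Fin (3^n+1), lapMatrix p n i j
      = (if (j:ℕ) = 0 then 1 else if (j:ℕ) = 1 then -1 else 0) := by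
    intro j
    show (if (i : ℕ) = 0 then _ else _) = _
    rw [if_pos hi]
  rw [Matrix.mulVec, dotProduct, Finset.sum_congr rfl fun j _ => by rw [key j]]
  rw [sum_if_two' 0 1 (by omega) (by have := pow3_pos n; omega) (by omega)]
  ring

lemma mulVec_last_row (p : ℝ) (n : ℕ) (v : Fin (3^n+1) → ℂ) (i : Fin (3^n+1))
    (hi : (i:ℕ) = 3^n) :
    (lapMatrix p n).mulVec v i
      = v ⟨3^n, by omega⟩ - v ⟨3^n - 1, by omega⟩ := by
  have hN := pow3_pos n
  have key : ∀ j : Fin (3^n+1), lapMatrix p n i j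
      = (if (j:ℕ) = 3^n then 1 else if (j:ℕ) = 3^n - 1 then -1 else 0) := by
    intro j
    show (if (i : ℕ) = 0 then _ else _) = _
    rw [if_neg (by omega), if_pos hi]
    exact if_congr Iff.rfl rfl (if_congr (by omega) rfl rfl)
  rw [Matrix.mulVec, dotProduct, Finset.sum_congr rfl fun j _ => by rw [key j]]
  rw [sum_if_two' (3^n) (3^n - 1) (by omega) (by omega) (by omega)]
  ring

lemma mulVec_mid_row (p : ℝ) (n : ℕ) (v : Fin (3^n+1) → ℂ) (i : Fin (3^n+1))
    (hi0 : (i:ℕ) ≠ 0) (hiN : (i:ℕ) ≠ 3^n) :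
    (lapMatrix p n).mulVec v i
      = v ⟨(i:ℕ), i.isLt⟩ - (hop p i ((i:ℕ)-1) : ℂ) * v ⟨(i:ℕ)-1, by omega⟩
        - (hop p i ((i:ℕ)+1) : ℂ) * v ⟨(i:ℕ)+1, by have := i.isLt; omega⟩ := by
  have hi1 : 1 ≤ (i:ℕ) := by omega
  have key : ∀ j : Fin (3^n+1), lapMatrix p n i j
      = (if (j:ℕ) = (i:ℕ) then 1 else if (j:ℕ) = (i:ℕ) - 1 then -(hop p i ((i:ℕ)-1) : ℂ)
          else if (j:ℕ) = (i:ℕ)+1 then -(hop p i ((i:ℕ)+1) : ℂ) else 0) := by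
    intro j
    show (if (i : ℕ) = 0 then _ else _) = _
    rw [if_neg hi0, if_neg hiN]
    exact if_congr Iff.rfl rfl (if_congr (by omega) rfl rfl)
  rw [Matrix.mulVec, dotProduct, Finset.sum_congr rfl fun j _ => by rw [key j]]
  rw [sum_if_three' (i:ℕ) ((i:ℕ)-1) ((i:ℕ)+1) i.isLt (by omega)
    (by have := i.isLt; omega) (by omega) (by omega) (by omega)]
  ring

lemma matSpec_eq_isEig (p : ℝ) (n : ℕ) :
    matSpec (lapMatrix p n) = {z | IsEig p (3^n) z} := by
  have hN := pow3_pos n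
  ext z
  simp only [matSpec, Set.mem_setOf_eq]
  constructor
  · rintro ⟨v, hv0, hv⟩
    classical
    refine ⟨fun x => if h : x < 3^n + 1 then v ⟨x, h⟩ else 0, ?_, ?_, ?_, ?_⟩
    all_goals
      have hfv : ∀ (x : ℕ) (h : x < 3^n+1),
          (fun x => if h : x < 3^n + 1 then v ⟨x, h⟩ else 0) x = v ⟨x, h⟩ :=
        fun x h => dif_pos h
    · obtain ⟨i, hi⟩ := Function.ne_iff.mp hv0
      refine ⟨(i:ℕ), by have := i.isLt; omega, ?_⟩
      rw [hfv _ i.isLt]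
      simpa using hi
    · have h0 := congrFun hv ⟨0, by omega⟩
      rw [mulVec_zero_row p n v _ rfl] at h0
      simp only [Pi.smul_apply, smul_eq_mul] at h0
      rw [hfv 0 (by omega), hfv 1 (by omega)]
      exact h0
    · intro x hx0 hxN
      have h := congrFun hv ⟨x, by omega⟩
      rw [mulVec_mid_row p n v ⟨x, by omega⟩ (by simp only [Fin.val_mk]; omega)
        (by simp only [Fin.val_mk]; omega)] at h
      simp only [Fin.val_mk] at h
      simp only [Pi.smul_apply, smul_eq_mul] at h
      rw [hfv x (by omega), hfv (x-1) (by omega), hfv (x+1) (by omega)]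
      exact h
    · have h := congrFun hv ⟨3^n, by omega⟩
      rw [mulVec_last_row p n v _ rfl] at h
      simp only [Pi.smul_apply, smul_eq_mul] at h
      rw [hfv (3^n) (by omega), hfv (3^n - 1) (by omega)]
      exact h
  · rintro ⟨f, ⟨x0, hx0, hfx0⟩, h0, hmid, hlast⟩
    refine ⟨fun i => f i, ?_, ?_⟩
    · intro hcon
      have := congrFun hcon ⟨x0, by omega⟩
      simp only [Pi.zero_apply] at this
      exact hfx0 this
    · funext i
      simp only [Pi.smul_apply, smul_eq_mul]
      rcases eq_or_ne (i:ℕ) 0 with hi | hi0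
      · rw [mulVec_zero_row p n _ i hi]
        simp only [Fin.val_mk, hi]
        exact h0
      · rcases eq_or_ne (i:ℕ) (3^n) with hi | hiN
        · rw [mulVec_last_row p n _ i hi]
          simp only [Fin.val_mk, hi]
          exact hlast
        · rw [mulVec_mid_row p n _ i hi0 hiN]
          simp only [Fin.val_mk]
          exact hmid (i:ℕ) (by omega) (by have := i.isLt; omega)

/-! ### Step B: spectral decimation -/

lemma isEig_one (p : ℝ) (z : ℂ) : IsEig p 1 z ↔ z = 0 ∨ z = 2 := by
  constructor
  · rintro ⟨f, ⟨x0, hx0, hfx0⟩, h0, _, hlast⟩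
    norm_num at hlast
    have hsum : z * (f 0 + f 1) = 0 := by linear_combination -h0 - hlast
    rcases mul_eq_zero.mp hsum with hz | hz
    · exact Or.inl hz
    · have hf1 : f 1 = -f 0 := by linear_combination hz
      have h2 : (z - 2) * f 0 = 0 := by linear_combination -h0 - hf1
      rcases mul_eq_zero.mp h2 with h | h
      · right; linear_combination h
      · exfalso
        have hf10 : f 1 = 0 := by rw [hf1, h, neg_zero]
        interval_cases x0 <;> simp_all
  · rintro (rfl | rfl)
    · exact ⟨fun _ => 1, ⟨0, by norm_num⟩, by ring, fun x hx0 hx1 => by omega, by ring⟩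
    · refine ⟨fun x => if x = 0 then 1 else -1, ⟨0, by norm_num⟩, by norm_num,
        fun x hx0 hx1 => by omega, by norm_num⟩

lemma isEig_decimation (p : ℝ) (hp : p ∈ Set.Ioo (0:ℝ) 1) (m : ℕ) (z : ℂ)
    (hD : ((1:ℂ) - z)^2 - (p:ℂ)^2 ≠ 0) :
    IsEig p (3^(m+1)) z ↔ IsEig p (3^m) (Rlap p z) := by
  obtain ⟨hp0, hp1⟩ := hp
  have hp0' : (p:ℂ) ≠ 0 := by exact_mod_cast ne_of_gt hp0
  have hp1' : (1:ℂ) - (p:ℂ) ≠ 0 := by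
    have : ((1 - p : ℝ) : ℂ) ≠ 0 := by exact_mod_cast ne_of_gt (by linarith : (0:ℝ) < 1 - p)
    push_cast at this; exact this
  set K := 3^m with hK
  have hK1 : 1 ≤ K := pow3_pos m
  have hN : 3^(m+1) = 3*K := by rw [pow_succ]; ring
  set w := Rlap p z with hwdef
  have hw : (p:ℂ) * (1 - p) * w = z * (z + p - 2) * (z - p - 1) := by
    rw [hwdef, Rlap]
    field_simp
  set D := ((1:ℂ) - z)^2 - (p:ℂ)^2 with hDdef
  constructor
  · rintro ⟨f, ⟨x0, hx0, hfx0⟩, h0, hmid, hlast⟩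
    rw [hN] at hx0 hmid hlast
    -- block equations
    have hA : ∀ k, k < K → f (3*k+1) - (1-(p:ℂ)) * f (3*k) - (p:ℂ) * f (3*k+2)
        = z * f (3*k+1) := by
      intro k hk
      have := hmid (3*k+1) (by omega) (by omega)
      rw [show 3*k+1-1 = 3*k from by omega, show 3*k+1+1 = 3*k+2 from by omega] at this
      rw [hop_3k1_left, hop_3k1_right] at this
      push_cast at this
      exact this
    have hB : ∀ k, k < K → f (3*k+2) - (p:ℂ) * f (3*k+1) - (1-(p:ℂ)) * f (3*k+3)
        = z * f (3*k+2) := by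
      intro k hk
      have := hmid (3*k+2) (by omega) (by omega)
      rw [show 3*k+2-1 = 3*k+1 from by omega] at this
      rw [hop_3k2_left, hop_3k2_right] at this
      push_cast at this
      exact this
    have hA' : ∀ k, k < K → D * f (3*k+1)
        = (1-z)*(1-(p:ℂ))*f (3*k) + (p:ℂ)*(1-(p:ℂ))*f (3*k+3) := by
      intro k hk
      linear_combination (1-z) * hA k hk + (p:ℂ) * hB k hk
    have hB' : ∀ k, k < K → D * f (3*k+2)
        = (p:ℂ)*(1-(p:ℂ))*f (3*k) + (1-z)*(1-(p:ℂ))*f (3*k+3) := by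
      intro k hk
      linear_combination (p:ℂ) * hA k hk + (1-z) * hB k hk
    refine ⟨fun k => f (3*k), ?_, ?_, ?_, ?_⟩
    · -- nonvanishing
      by_contra hcon
      push_neg at hcon
      obtain ⟨k, hcase⟩ : ∃ k, x0 = 3*k ∨ x0 = 3*k+1 ∨ x0 = 3*k+2 := ⟨x0/3, by omega⟩
      rcases hcase with rfl | rfl | rfl
      · exact hfx0 (hcon k (by omega))
      · have hk : k < K := by omega
        have h1 := hA' k hk
        rw [hcon k (by omega), show 3*k+3 = 3*(k+1) from by omega,
          hcon (k+1) (by omega)] at h1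
        have h3 : D * f (3*k+1) = 0 := by linear_combination h1
        exact hfx0 ((mul_eq_zero.mp h3).resolve_left hD)
      · have hk : k < K := by omega
        have h1 := hB' k hk
        rw [hcon k (by omega), show 3*k+3 = 3*(k+1) from by omega,
          hcon (k+1) (by omega)] at h1
        have h3 : D * f (3*k+2) = 0 := by linear_combination h1
        exact hfx0 ((mul_eq_zero.mp h3).resolve_left hD)
    · -- coarse row 0
      have hA0 := hA' 0 (by omega)
      simp only [Nat.mul_zero, Nat.mul_one] at hA0
      have key : (p:ℂ)*(1-(p:ℂ)) * (f 0 - f 3) = (p:ℂ)*(1-(p:ℂ)) * (w * f 0) := by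
        linear_combination D * h0 + hA0 - f 0 * hw
      have := mul_left_cancel₀ (mul_ne_zero hp0' hp1') key
      linear_combination this
    · -- coarse interior rows
      intro k hk0 hkK
      have hC := hmid (3*k) (by omega) (by omega)
      rw [hop_3k_left k (by omega), hop_3k_right k (by omega),
        show 3*k-1 = 3*(k-1)+2 from by omega] at hC
      have hBk := hB' (k-1) (by omega)
      rw [show 3*(k-1)+3 = 3*k from by omega] at hBk
      have hAk := hA' k (by omega)
      rw [show 3*k+3 = 3*(k+1) from by omega] at hAk
      have hab : (hop p k (k-1) : ℂ) + (hop p k (k+1) : ℂ) = 1 := by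
        have := hop_sum (p := p) k (by omega)
        exact_mod_cast this
      have key : (p:ℂ)*(1-(p:ℂ)) * (f (3*k) - (hop p k (k-1):ℂ) * f (3*(k-1))
            - (hop p k (k+1):ℂ) * f (3*(k+1)))
          = (p:ℂ)*(1-(p:ℂ)) * (w * f (3*k)) := by
        linear_combination D * hC + (hop p k (k-1):ℂ) * hBk + (hop p k (k+1):ℂ) * hAk
          + ((1-z)*(1-(p:ℂ))*f (3*k)) * hab - f (3*k) * hw
      have := mul_left_cancel₀ (mul_ne_zero hp0' hp1') key
      linear_combination this
    · -- coarse last row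
      have hBk := hB' (K-1) (by omega)
      rw [show 3*(K-1)+3 = 3*K from by omega] at hBk
      rw [show 3*K-1 = 3*(K-1)+2 from by omega] at hlast
      have key : (p:ℂ)*(1-(p:ℂ)) * (f (3*K) - f (3*(K-1)))
          = (p:ℂ)*(1-(p:ℂ)) * (w * f (3*K)) := by
        linear_combination D * hlast + hBk - f (3*K) * hw
      have := mul_left_cancel₀ (mul_ne_zero hp0' hp1') key
      linear_combination this
  · rintro ⟨u, ⟨k0, hk0, huk0⟩, h0, hmid, hlast⟩
    refine ⟨fun x => if x % 3 = 0 then u (x/3)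
      else if x % 3 = 1 then ((1-z)*(1-(p:ℂ))*u (x/3) + (p:ℂ)*(1-(p:ℂ))*u (x/3+1))/D
      else ((p:ℂ)*(1-(p:ℂ))*u (x/3) + (1-z)*(1-(p:ℂ))*u (x/3+1))/D, ?_, ?_, ?_, ?_⟩
    all_goals
      have hf0 : ∀ k : ℕ, (fun x => if x % 3 = 0 then u (x/3)
          else if x % 3 = 1 then ((1-z)*(1-(p:ℂ))*u (x/3) + (p:ℂ)*(1-(p:ℂ))*u (x/3+1))/D
          else ((p:ℂ)*(1-(p:ℂ))*u (x/3) + (1-z)*(1-(p:ℂ))*u (x/3+1))/D) (3*k) = u k := by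
        intro k
        simp [Nat.mul_mod_right, Nat.mul_div_cancel_left]
    all_goals
      have hf1 : ∀ k : ℕ, (fun x => if x % 3 = 0 then u (x/3)
          else if x % 3 = 1 then ((1-z)*(1-(p:ℂ))*u (x/3) + (p:ℂ)*(1-(p:ℂ))*u (x/3+1))/D
          else ((p:ℂ)*(1-(p:ℂ))*u (x/3) + (1-z)*(1-(p:ℂ))*u (x/3+1))/D) (3*k+1)
          = ((1-z)*(1-(p:ℂ))*u k + (p:ℂ)*(1-(p:ℂ))*u (k+1))/D := by
        intro k
        simp [Nat.mul_add_mod, Nat.mul_add_div]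
    all_goals
      have hf2 : ∀ k : ℕ, (fun x => if x % 3 = 0 then u (x/3)
          else if x % 3 = 1 then ((1-z)*(1-(p:ℂ))*u (x/3) + (p:ℂ)*(1-(p:ℂ))*u (x/3+1))/D
          else ((p:ℂ)*(1-(p:ℂ))*u (x/3) + (1-z)*(1-(p:ℂ))*u (x/3+1))/D) (3*k+2)
          = ((p:ℂ)*(1-(p:ℂ))*u k + (1-z)*(1-(p:ℂ))*u (k+1))/D := by
        intro k
        simp [Nat.mul_add_mod, Nat.mul_add_div]
    · exact ⟨3*k0, by omega, by rw [hf0 k0]; exact huk0⟩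
    · -- fine row 0
      have e0 : (fun x => if x % 3 = 0 then u (x/3)
          else if x % 3 = 1 then ((1-z)*(1-(p:ℂ))*u (x/3) + (p:ℂ)*(1-(p:ℂ))*u (x/3+1))/D
          else ((p:ℂ)*(1-(p:ℂ))*u (x/3) + (1-z)*(1-(p:ℂ))*u (x/3+1))/D) 0 = u 0 := by norm_num
      have e1 : (fun x => if x % 3 = 0 then u (x/3)
          else if x % 3 = 1 then ((1-z)*(1-(p:ℂ))*u (x/3) + (p:ℂ)*(1-(p:ℂ))*u (x/3+1))/D
          else ((p:ℂ)*(1-(p:ℂ))*u (x/3) + (1-z)*(1-(p:ℂ))*u (x/3+1))/D) 1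
          = ((1-z)*(1-(p:ℂ))*u 0 + (p:ℂ)*(1-(p:ℂ))*u 1)/D := by norm_num
      rw [e0, e1]
      field_simp
      linear_combination ((p:ℂ)*(1-(p:ℂ)))*h0 + u 0 * hw
    · -- fine interior rows
      intro x hx0 hxN
      rw [hN] at hxN
      obtain ⟨k, hcase⟩ : ∃ k, x = 3*k ∨ x = 3*k+1 ∨ x = 3*k+2 := ⟨x/3, by omega⟩
      rcases hcase with rfl | rfl | rfl
      · -- x = 3k, interior: 1 ≤ k < K
        rw [hop_3k_left k (by omega), hop_3k_right k (by omega),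
          show 3*k-1 = 3*(k-1)+2 from by omega]
        rw [hf0 k, hf2 (k-1), hf1 k, show k-1+1 = k from by omega]
        have hm := hmid k (by omega) (by omega)
        have hab : (hop p k (k-1) : ℂ) + (hop p k (k+1) : ℂ) = 1 := by
          exact_mod_cast hop_sum (p := p) k (by omega)
        field_simp
        linear_combination ((p:ℂ)*(1-(p:ℂ)))*hm + u k * hw
          - ((1-z)*(1-(p:ℂ))*u k) * hab
      · rw [show 3*k+1-1 = 3*k from by omega, show 3*k+1+1 = 3*k+2 from by omega,
          hop_3k1_left, hop_3k1_right, hf0 k, hf1 k, hf2 k]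
        push_cast
        field_simp
        ring
      · rw [show 3*k+2-1 = 3*k+1 from by omega, hop_3k2_left, hop_3k2_right,
          show 3*k+2+1 = 3*(k+1) from by omega, hf1 k, hf2 k, hf0 (k+1)]
        push_cast
        field_simp
        ring
    · -- fine last row
      rw [hN, show 3*K-1 = 3*(K-1)+2 from by omega, hf0 K, hf2 (K-1),
        show K-1+1 = K from by omega]
      field_simp
      linear_combination ((p:ℂ)*(1-(p:ℂ)))*hlast + u K * hw

/-! ### Step C: exceptional values -/

def auxg (p : ℝ) : ℕ → ℝ
  | 0 => (2*p^2 + p - 1)/p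
  | (k+1) => (hop p (k+1) k / hop p (k+1) (k+2)) * auxg p k + (2*p^2 + p - 1)/p

lemma hop_succ_left_pos {p : ℝ} (hp0 : 0 < p) (hp1 : p < 1) (k : ℕ) :
    0 < hop p (k+1) k := by
  have := hop_left_pos hp0 hp1 (k+1) (by omega)
  rwa [show k+1-1 = k from by omega] at this

lemma hop_succ_right_pos {p : ℝ} (hp0 : 0 < p) (hp1 : p < 1) (k : ℕ) :
    0 < hop p (k+1) (k+2) := by
  have := hop_right_pos hp0 hp1 (k+1) (by omega)
  rwa [show k+1+1 = k+2 from by omega] at this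

lemma hop_succ_sum {p : ℝ} (k : ℕ) : hop p (k+1) k + hop p (k+1) (k+2) = 1 := by
  have := hop_sum (p := p) (k+1) (by omega)
  rwa [show k+1-1 = k from by omega, show k+1+1 = k+2 from by omega] at this

lemma auxg_pos {p : ℝ} (hp0 : 0 < p) (hp1 : p < 1) (hph : p ≠ 1/2) (k : ℕ) :
    0 < ((2*p^2 + p - 1)/p) * auxg p k := by
  have hδ : (2*p^2 + p - 1)/p ≠ 0 := by
    have h2 : 2*p^2 + p - 1 = (2*p - 1)*(p + 1) := by ring
    have : 2*p - 1 ≠ 0 := fun h => hph (by linarith)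
    have hnum : 2*p^2 + p - 1 ≠ 0 := by
      rw [h2]
      exact mul_ne_zero this (by linarith)
    exact div_ne_zero hnum (ne_of_gt hp0)
  induction k with
  | zero =>
    simp only [auxg]
    exact mul_self_pos.mpr hδ
  | succ k ih =>
    simp only [auxg]
    have hr : 0 < hop p (k+1) k / hop p (k+1) (k+2) :=
      div_pos (hop_succ_left_pos hp0 hp1 k) (hop_succ_right_pos hp0 hp1 k)
    calc (0:ℝ) < (hop p (k+1) k / hop p (k+1) (k+2)) * (((2*p^2 + p - 1)/p) * auxg p k)
          + ((2*p^2 + p - 1)/p)^2 := by positivity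
    _ = ((2*p^2 + p - 1)/p) * ((hop p (k+1) k / hop p (k+1) (k+2)) * auxg p k
          + (2*p^2 + p - 1)/p) := by ring

lemma auxg_ne {p : ℝ} (hp0 : 0 < p) (hp1 : p < 1) (hph : p ≠ 1/2) (k : ℕ) :
    auxg p k ≠ 0 := by
  intro h
  have := auxg_pos hp0 hp1 hph k
  rw [h, mul_zero] at this
  exact lt_irrefl _ this

lemma not_isEig_exc (p : ℝ) (hp0 : 0 < p) (hp1 : p < 1) (hph : p ≠ 1/2) (m : ℕ) (ε : ℝ)
    (hεpm : ε = 1 ∨ ε = -1) : ¬ IsEig p (3^(m+1)) ((1 - ε*p : ℝ) : ℂ) := by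
  rintro ⟨f, ⟨x0, hx0, hfx0⟩, h0, hmid, hlast⟩
  set K := 3^m with hK
  have hK1 : 1 ≤ K := pow3_pos m
  have hN : 3^(m+1) = 3*K := by rw [pow_succ]; ring
  rw [hN] at hx0 hmid hlast
  set z : ℂ := ((1 - ε*p : ℝ) : ℂ) with hzdef
  have hz : z = 1 - (ε:ℂ)*(p:ℂ) := by rw [hzdef]; push_cast; ring
  have hε2 : (ε:ℂ)*(ε:ℂ) = 1 := by
    rcases hεpm with rfl | rfl <;> norm_num
  have hε0 : (ε:ℂ) ≠ 0 := by
    rcases hεpm with rfl | rfl <;> norm_num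
  have hp0' : (p:ℂ) ≠ 0 := by exact_mod_cast ne_of_gt hp0
  have hp1' : ((1-p:ℝ):ℂ) ≠ 0 := by exact_mod_cast ne_of_gt (by linarith : (0:ℝ) < 1-p)
  -- fine block rows
  have hA : ∀ k, k < K → f (3*k+1) - ((1-p:ℝ):ℂ) * f (3*k) - (p:ℂ) * f (3*k+2)
      = z * f (3*k+1) := by
    intro k hk
    have := hmid (3*k+1) (by omega) (by omega)
    rw [show 3*k+1-1 = 3*k from by omega, show 3*k+1+1 = 3*k+2 from by omega,
      hop_3k1_left, hop_3k1_right] at this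
    push_cast at this ⊢
    exact this
  have hB : ∀ k, k < K → f (3*k+2) - (p:ℂ) * f (3*k+1) - ((1-p:ℝ):ℂ) * f (3*(k+1))
      = z * f (3*k+2) := by
    intro k hk
    have := hmid (3*k+2) (by omega) (by omega)
    rw [show 3*k+2-1 = 3*k+1 from by omega, hop_3k2_left, hop_3k2_right,
      show 3*k+3 = 3*(k+1) from by omega] at this
    push_cast at this ⊢
    exact this
  -- u recursion
  have hu : ∀ k, k < K → f (3*(k+1)) = -(ε:ℂ) * f (3*k) := by
    intro k hk
    have key : ((1-p:ℝ):ℂ) * (f (3*(k+1)) + (ε:ℂ) * f (3*k)) = 0 := by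
      linear_combination (-(ε:ℂ)) * hA k hk - hB k hk
        + ((p:ℂ) * f (3*k+1)) * hε2 - ((ε:ℂ) * f (3*k+1) + f (3*k+2)) * hz
    have := (mul_eq_zero.mp key).resolve_left hp1'
    linear_combination this
  have hu' : ∀ k, k ≤ K → f (3*k) = (((-ε)^k : ℝ) : ℂ) * f 0 := by
    intro k
    induction k with
    | zero => intro _; norm_num
    | succ k ih =>
      intro hk
      rw [hu k (by omega), ih (by omega)]
      push_cast
      ring
  -- the forced f(3k+2) values
  have hg : ∀ k, k < K → f (3*k+2) = (((-ε)^k * (auxg p k - p) : ℝ) : ℂ) * f 0 := by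
    intro k
    induction k with
    | zero =>
      intro hk
      have hA0 := hA 0 hk
      norm_num at hA0
      -- f 1 = ε p f 0
      have hf1 : f 1 = (ε:ℂ) * (p:ℂ) * f 0 := by
        linear_combination -h0 - f 0 * hz
      have key : (p:ℂ) * f 2 = (p:ℂ) * ((((-ε)^0 * (auxg p 0 - p) : ℝ) : ℂ) * f 0) := by
        simp only [auxg]
        push_cast
        field_simp
        linear_combination (-1 : ℂ) * hA0 - f 1 * hz + (ε:ℂ) * (p:ℂ) * hf1
          + ((p:ℂ)*(p:ℂ)* f 0) * hε2
      exact mul_left_cancel₀ hp0' key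
    | succ k ih =>
      intro hk1
      have ihk := ih (by omega)
      have hm := hmid (3*(k+1)) (by omega) (by omega)
      rw [hop_3k_left (k+1) (by omega), hop_3k_right (k+1) (by omega),
        show 3*(k+1)-1 = 3*k+2 from by omega, show k+1-1 = k from by omega,
        show k+1+1 = k+2 from by omega] at hm
      have hAk := hA (k+1) hk1
      have hu1 := hu' (k+1) (by omega)
      -- b * s = ε p u' - a * t
      have hs : ((hop p (k+1) (k+2) : ℝ):ℂ) * f (3*(k+1)+1)
          = (ε:ℂ)*(p:ℂ)*f (3*(k+1)) - ((hop p (k+1) k : ℝ):ℂ) * f (3*k+2) := by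
        linear_combination -hm - f (3*(k+1)) * hz
      -- p * f5 = ε p s - (1-p) u'
      have hps : (p:ℂ) * f (3*(k+1)+2)
          = (ε:ℂ)*(p:ℂ)*f (3*(k+1)+1) - ((1-p:ℝ):ℂ) * f (3*(k+1)) := by
        linear_combination -hAk - f (3*(k+1)+1) * hz
      have habR : hop p (k+1) k + hop p (k+1) (k+2) = 1 := hop_succ_sum k
      have hbR : hop p (k+1) (k+2) ≠ 0 := ne_of_gt (hop_succ_right_pos hp0 hp1 k)
      -- real coefficient identity
      have hreal : hop p (k+1) (k+2) * (p * ((-ε)^(k+1) * (auxg p (k+1) - p)))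
          = p^2 * (-ε)^(k+1) - hop p (k+1) (k+2) * (1-p) * (-ε)^(k+1)
            + hop p (k+1) k * p * (-ε)^(k+1) * (auxg p k - p) := by
        simp only [auxg]
        rw [show hop p (k+1) k = 1 - hop p (k+1) (k+2) from by linarith]
        field_simp
        ring
      -- assemble over ℂ
      have key : ((hop p (k+1) (k+2) : ℝ):ℂ) * ((p:ℂ) * f (3*(k+1)+2))
          = ((hop p (k+1) (k+2) : ℝ):ℂ) * ((p:ℂ) * ((((-ε)^(k+1) * (auxg p (k+1) - p) : ℝ) : ℂ) * f 0)) := by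
        have hrealC := congrArg (fun t : ℝ => (t : ℂ)) hreal
        push_cast at hrealC
        push_cast at hu1 ihk hs hps
        push_cast
        linear_combination ((hop p (k+1) (k+2) : ℝ):ℂ) * hps + (ε:ℂ)*(p:ℂ) * hs
          + ((p:ℂ)^2 * f (3*(k+1))) * hε2
          + ((p:ℂ)^2 - (1 - (p:ℂ))*((hop p (k+1) (k+2):ℝ):ℂ)) * hu1
          + (-(ε:ℂ)*(p:ℂ)*((hop p (k+1) k : ℝ):ℂ)) * ihk - f 0 * hrealC
      have := mul_left_cancel₀ (show ((hop p (k+1) (k+2) : ℝ):ℂ) ≠ 0 by exact_mod_cast hbR) key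
      exact mul_left_cancel₀ hp0' this
  -- final contradiction
  have hgK := hg (K-1) (by omega)
  have huK := hu' K (by omega)
  rw [show 3*K-1 = 3*(K-1)+2 from by omega] at hlast
  have hzero : f 0 = 0 := by
    have e : (-(ε:ℂ))^K = -(ε:ℂ) * (-(ε:ℂ))^(K-1) := by
      conv_lhs => rw [show K = K-1+1 from by omega]
      rw [pow_succ']
    have huK' : f (3*K) = -(ε:ℂ) * ((-(ε:ℂ))^(K-1) * f 0) := by
      push_cast at huK
      rw [huK, e]; ring
    have key : (((-ε)^(K-1) * auxg p (K-1) : ℝ):ℂ) * f 0 = 0 := by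
      push_cast at hgK ⊢
      linear_combination -hlast - f (3*K) * hz - hgK + ((ε:ℂ)*(p:ℂ))*huK'
        - ((p:ℂ)*(-(ε:ℂ))^(K-1)*f 0)*hε2
    have hcoef : (((-ε)^(K-1) * auxg p (K-1) : ℝ):ℂ) ≠ 0 := by
      have h1 : (-ε)^(K-1) ≠ 0 := by
        apply pow_ne_zero
        rcases hεpm with rfl | rfl <;> norm_num
      exact_mod_cast mul_ne_zero h1 (auxg_ne hp0 hp1 hph (K-1))
    exact (mul_eq_zero.mp key).resolve_left hcoef
  have hall3 : ∀ k, k ≤ K → f (3*k) = 0 := by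
    intro k hk; rw [hu' k hk, hzero, mul_zero]
  have hall2 : ∀ k, k < K → f (3*k+2) = 0 := by
    intro k hk; rw [hg k hk, hzero, mul_zero]
  have hall1 : ∀ k, k < K → f (3*k+1) = 0 := by
    intro k hk
    have h1 := hA k hk
    rw [hall3 k (le_of_lt hk), hall2 k hk] at h1
    have h2 : ((ε:ℂ)*(p:ℂ)) * f (3*k+1) = 0 := by
      linear_combination h1 + f (3*k+1) * hz
    exact (mul_eq_zero.mp h2).resolve_left (mul_ne_zero hε0 hp0')
  obtain ⟨k, hcase⟩ : ∃ k, x0 = 3*k ∨ x0 = 3*k+1 ∨ x0 = 3*k+2 := ⟨x0/3, by omega⟩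
  rcases hcase with rfl | rfl | rfl
  · exact hfx0 (hall3 k (by omega))
  · exact hfx0 (hall1 k (by omega))
  · exact hfx0 (hall2 k (by omega))

/-! ### Step D: p = 1/2 explicit eigenvectors -/

lemma pow3_mod6 (m : ℕ) : 3^(m+1) % 6 = 3 := by
  induction m with
  | zero => norm_num
  | succ m ih =>
    have h : 3^(m+1+1) = 3 * 3^(m+1) := by rw [pow_succ]; ring
    omega

lemma isEig_half_b (m : ℕ) : IsEig (1/2) (3^(m+1)) ((3/2 : ℝ) : ℂ) := by
  have hN : 3 ∣ 3^(m+1) := dvd_pow_self 3 (by omega)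
  have hN1 : 1 ≤ 3^(m+1) := pow3_pos (m+1)
  refine ⟨fun x => if x % 3 = 0 then 1 else -(1/2), ⟨0, by norm_num⟩, by norm_num, ?_, ?_⟩
  · intro x hx0 hxN
    obtain ⟨hL, hR⟩ := hop_half x (by omega)
    rw [hL, hR]
    have hr : x % 3 = 0 ∨ x % 3 = 1 ∨ x % 3 = 2 := by omega
    rcases hr with hr | hr | hr
    · have h1 : (x-1) % 3 = 2 := by omega
      have h2 : (x+1) % 3 = 1 := by omega
      simp only [hr, h1, h2]
      push_cast
      norm_num
    · have h1 : (x-1) % 3 = 0 := by omega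
      have h2 : (x+1) % 3 = 2 := by omega
      simp only [hr, h1, h2]
      push_cast
      norm_num
    · have h1 : (x-1) % 3 = 1 := by omega
      have h2 : (x+1) % 3 = 0 := by omega
      simp only [hr, h1, h2]
      push_cast
      norm_num
  · have h1 : 3^(m+1) % 3 = 0 := by omega
    have h2 : (3^(m+1) - 1) % 3 = 2 := by omega
    simp only [h1, h2]
    push_cast
    norm_num

lemma isEig_half_a (m : ℕ) : IsEig (1/2) (3^(m+1)) ((1/2 : ℝ) : ℂ) := by
  have hN : 3^(m+1) % 6 = 3 := pow3_mod6 m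
  have hN1 : 1 ≤ 3^(m+1) := pow3_pos (m+1)
  refine ⟨fun x => if x % 6 = 0 then 1 else if x % 6 = 1 then 1/2 else if x % 6 = 2 then -(1/2)
    else if x % 6 = 3 then -1 else if x % 6 = 4 then -(1/2) else 1/2,
    ⟨0, by norm_num⟩, by norm_num, ?_, ?_⟩
  · intro x hx0 hxN
    obtain ⟨hL, hR⟩ := hop_half x (by omega)
    rw [hL, hR]
    have hr : x % 6 = 0 ∨ x % 6 = 1 ∨ x % 6 = 2 ∨ x % 6 = 3 ∨ x % 6 = 4 ∨ x % 6 = 5 := by omega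
    rcases hr with hr | hr | hr | hr | hr | hr <;>
    · have h1 : (x-1) % 6 = (x % 6 + 5) % 6 := by omega
      have h2 : (x+1) % 6 = (x % 6 + 1) % 6 := by omega
      rw [hr] at h1 h2
      norm_num at h1 h2
      simp only [hr, h1, h2]
      push_cast
      norm_num
  · have h1 : 3^(m+1) % 6 = 3 := hN
    have h2 : (3^(m+1) - 1) % 6 = 2 := by omega
    simp only [h1, h2]
    push_cast
    norm_num

/-! ### Step E: the set identity and master theorem -/

section main
variable {p : ℝ} (hp : p ∈ Set.Ioo (0:ℝ) 1)
include hp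

lemma cpx0 : (p:ℂ) ≠ 0 := by exact_mod_cast ne_of_gt hp.1
lemma cpx1 : 1 - (p:ℂ) ≠ 0 := by
  intro h
  have h2 : (p:ℂ) = 1 := by linear_combination -h
  have : (p:ℝ) = 1 := by exact_mod_cast h2
  linarith [hp.2]

lemma Rlap_eq_zero_iff (z : ℂ) : Rlap p z = 0 ↔ z = 0 ∨ z = 2 - p ∨ z = 1 + p := by
  have h1 := cpx0 hp
  have h2 := cpx1 hp
  rw [Rlap, _root_.div_eq_zero_iff]
  constructor
  · rintro (h | h)
    · rcases mul_eq_zero.mp h with h | h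
      · rcases mul_eq_zero.mp h with h | h
        · exact Or.inl h
        · exact Or.inr (Or.inl (by linear_combination h))
      · exact Or.inr (Or.inr (by linear_combination h))
    · exact absurd h (mul_ne_zero h1 h2)
  · rintro (rfl | rfl | rfl) <;> left <;> ring

lemma Rlap_eq_two_iff (z : ℂ) : Rlap p z = 2 ↔ z = 2 ∨ z = p ∨ z = 1 - p := by
  have h1 := cpx0 hp
  have h2 := cpx1 hp
  have key : Rlap p z - 2 = (z - 2) * (z - p) * (z - (1 - p)) / ((p:ℂ) * (1 - p)) := by
    rw [Rlap]
    field_simp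
    ring
  rw [← sub_eq_zero (b := (2:ℂ)), key, _root_.div_eq_zero_iff]
  constructor
  · rintro (h | h)
    · rcases mul_eq_zero.mp h with h | h
      · rcases mul_eq_zero.mp h with h | h
        · exact Or.inl (by linear_combination h)
        · exact Or.inr (Or.inl (by linear_combination h))
      · exact Or.inr (Or.inr (by linear_combination h))
    · exact absurd h (mul_ne_zero h1 h2)
  · rintro (rfl | rfl | rfl) <;> left <;> ring

lemma Rlap_zero : Rlap p 0 = 0 := by rw [Rlap]; simp

lemma Rlap_two : Rlap p 2 = 2 := (Rlap_eq_two_iff hp 2).mpr (Or.inl rfl)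

lemma Rlap_iter_two : ∀ j, (Rlap p)^[j] (2:ℂ) = 2 := by
  intro j
  induction j with
  | zero => rfl
  | succ j ih => rw [Function.iterate_succ_apply, Rlap_two hp, ih]

lemma Rlap_iter_zero : ∀ j, (Rlap p)^[j] (0:ℂ) = 0 := by
  intro j
  induction j with
  | zero => rfl
  | succ j ih => rw [Function.iterate_succ_apply, Rlap_zero hp, ih]

lemma Rlap_iter_one_sub (i : ℕ) (hi : 1 ≤ i) : (Rlap p)^[i] (1 - (p:ℂ)) = 2 := by
  obtain ⟨j, rfl⟩ : ∃ j, i = j + 1 := ⟨i - 1, by omega⟩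
  rw [Function.iterate_succ_apply,
    show Rlap p (1 - (p:ℂ)) = 2 from (Rlap_eq_two_iff hp _).mpr (Or.inr (Or.inr rfl)),
    Rlap_iter_two hp]

lemma Rlap_iter_one_add (i : ℕ) (hi : 1 ≤ i) : (Rlap p)^[i] (1 + (p:ℂ)) = 0 := by
  obtain ⟨j, rfl⟩ : ∃ j, i = j + 1 := ⟨i - 1, by omega⟩
  rw [Function.iterate_succ_apply,
    show Rlap p (1 + (p:ℂ)) = 0 from (Rlap_eq_zero_iff hp _).mpr (Or.inr (Or.inr rfl)),
    Rlap_iter_zero hp]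

lemma mem_rhs_iff (n : ℕ) (z : ℂ) :
    z ∈ (({0, 2} : Set ℂ) ∪ ⋃ i ∈ Finset.range n, (Rlap p)^[i] ⁻¹' {(p : ℂ), 2 - (p : ℂ)})
      ↔ (z = 0 ∨ z = 2) ∨ ∃ i, i < n ∧ ((Rlap p)^[i] z = p ∨ (Rlap p)^[i] z = 2 - p) := by
  simp [Set.mem_union, Set.mem_iUnion, Set.mem_preimage, Set.mem_insert_iff,
    Finset.mem_range]


lemma master : ∀ n : ℕ, matSpec (lapMatrix p n)
    = ({0, 2} : Set ℂ) ∪ ⋃ i ∈ Finset.range n, (Rlap p)^[i] ⁻¹' {(p : ℂ), 2 - (p : ℂ)} := by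
  intro n
  induction n with
  | zero =>
    rw [matSpec_eq_isEig]
    ext z
    rw [mem_rhs_iff hp]
    simp only [pow_zero, Set.mem_setOf_eq, isEig_one]
    constructor
    · exact fun h => Or.inl h
    · rintro (h | ⟨i, hi, _⟩)
      · exact h
      · omega
  | succ n ih =>
    ext z
    rw [matSpec_eq_isEig, Set.mem_setOf_eq, mem_rhs_iff hp]
    rcases eq_or_ne z (1 - (p:ℂ)) with rfl | hz1
    · rcases eq_or_ne p (1/2) with hp2 | hp2
      · -- p = 1/2 : both sides hold
        constructor
        · intro _
          refine Or.inr ⟨0, by omega, Or.inl ?_⟩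
          rw [Function.iterate_zero_apply, hp2]
          norm_num
        · intro _
          have := isEig_half_a n
          rw [hp2]
          convert this using 2
          push_cast
          norm_num
      · -- p ≠ 1/2 : both sides fail
        have hL : ¬ IsEig p (3^(n+1)) (1 - (p:ℂ)) := by
          have := not_isEig_exc p hp.1 hp.2 hp2 n 1 (Or.inl rfl)
          convert this using 2
          push_cast
          ring
        constructor
        · intro h; exact absurd h hL
        · rintro (h | ⟨i, hi, hval⟩)
          · rcases h with h | h
            · have : (1:ℝ) - p = 0 := by exact_mod_cast (by push_cast; linear_combination h : ((1-p:ℝ):ℂ) = ((0:ℝ):ℂ))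
              linarith [hp.2]
            · have : (1:ℝ) - p = 2 := by exact_mod_cast (by push_cast; linear_combination h : ((1-p:ℝ):ℂ) = ((2:ℝ):ℂ))
              linarith [hp.1]
          · exfalso
            rcases Nat.eq_zero_or_pos i with rfl | hi1
            · rw [Function.iterate_zero_apply] at hval
              rcases hval with h | h
              · have : (1:ℝ) - p = p := by exact_mod_cast (by push_cast; linear_combination h : ((1-p:ℝ):ℂ) = ((p:ℝ):ℂ))
                apply hp2; linarith
              · have h2 : (0:ℂ) = 1 := by linear_combination h
                simp at h2
            · rw [Rlap_iter_one_sub hp i hi1] at hval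
              rcases hval with h | h
              · have : (2:ℝ) = p := by exact_mod_cast (by push_cast; linear_combination h : ((2:ℝ):ℂ) = ((p:ℝ):ℂ))
                linarith [hp.2]
              · have h2 : (p:ℂ) = 0 := by linear_combination h
                have : (p:ℝ) = 0 := by exact_mod_cast h2
                linarith [hp.1]
    · rcases eq_or_ne z (1 + (p:ℂ)) with rfl | hz2
      · rcases eq_or_ne p (1/2) with hp2 | hp2
        · constructor
          · intro _
            refine Or.inr ⟨0, by omega, Or.inr ?_⟩
            rw [Function.iterate_zero_apply, hp2]
            norm_num
          · intro _
            have := isEig_half_b n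
            rw [hp2]
            convert this using 2
            push_cast
            norm_num
        · have hL : ¬ IsEig p (3^(n+1)) (1 + (p:ℂ)) := by
            have := not_isEig_exc p hp.1 hp.2 hp2 n (-1) (Or.inr rfl)
            convert this using 2
            push_cast
            ring
          constructor
          · intro h; exact absurd h hL
          · rintro (h | ⟨i, hi, hval⟩)
            · rcases h with h | h
              · have : (1:ℝ) + p = 0 := by exact_mod_cast (by push_cast; linear_combination h : ((1+p:ℝ):ℂ) = ((0:ℝ):ℂ))
                linarith [hp.1]
              · have : (1:ℝ) + p = 2 := by exact_mod_cast (by push_cast; linear_combination h : ((1+p:ℝ):ℂ) = ((2:ℝ):ℂ))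
                linarith [hp.2]
            · exfalso
              rcases Nat.eq_zero_or_pos i with rfl | hi1
              · rw [Function.iterate_zero_apply] at hval
                rcases hval with h | h
                · have h2 : (1:ℂ) = 0 := by linear_combination h
                  simp at h2
                · have : (1:ℝ) + p = 2 - p := by exact_mod_cast (by push_cast; linear_combination h : ((1+p:ℝ):ℂ) = ((2-p:ℝ):ℂ))
                  apply hp2; linarith
              · rw [Rlap_iter_one_add hp i hi1] at hval
                rcases hval with h | h
                · have : (0:ℝ) = p := by exact_mod_cast (by push_cast; linear_combination h : ((0:ℝ):ℂ) = ((p:ℝ):ℂ))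
                  linarith [hp.1]
                · have : (0:ℝ) = 2 - p := by exact_mod_cast (by push_cast; linear_combination h : ((0:ℝ):ℂ) = ((2-p:ℝ):ℂ))
                  linarith [hp.2]
      · -- generic z
        have h1 : 1 - z - (p:ℂ) ≠ 0 := fun h => hz1 (by linear_combination -h)
        have h2 : 1 - z + (p:ℂ) ≠ 0 := fun h => hz2 (by linear_combination -h)
        have hD : ((1:ℂ) - z)^2 - (p:ℂ)^2 ≠ 0 := fun h =>
          (mul_ne_zero h1 h2) (by linear_combination h)
        have e3 : IsEig p (3^n) (Rlap p z) ↔ (Rlap p z) ∈ matSpec (lapMatrix p n) := by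
          rw [matSpec_eq_isEig p n]; exact Iff.rfl
        rw [isEig_decimation p hp n z hD, e3, ih, mem_rhs_iff hp]
        constructor
        · rintro (h | ⟨i, hi, hval⟩)
          · rcases h with h | h
            · rcases (Rlap_eq_zero_iff hp z).mp h with rfl | rfl | h0
              · exact Or.inl (Or.inl rfl)
              · exact Or.inr ⟨0, by omega, Or.inr (by simp)⟩
              · exact absurd h0 hz2
            · rcases (Rlap_eq_two_iff hp z).mp h with rfl | rfl | h0
              · exact Or.inl (Or.inr rfl)
              · exact Or.inr ⟨0, by omega, Or.inl (by simp)⟩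
              · exact absurd h0 hz1
          · exact Or.inr ⟨i+1, by omega, by rwa [Function.iterate_succ_apply]⟩
        · rintro (h | ⟨i, hi, hval⟩)
          · rcases h with rfl | rfl
            · exact Or.inl (Or.inl (Rlap_zero hp))
            · exact Or.inl (Or.inr (Rlap_two hp))
          · rcases Nat.eq_zero_or_pos i with rfl | hi1
            · rw [Function.iterate_zero_apply] at hval
              rcases hval with rfl | rfl
              · exact Or.inl (Or.inr ((Rlap_eq_two_iff hp _).mpr (Or.inr (Or.inl rfl))))
              · exact Or.inl (Or.inl ((Rlap_eq_zero_iff hp _).mpr (Or.inr (Or.inl rfl))))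
            · obtain ⟨j, rfl⟩ : ∃ j, i = j+1 := ⟨i-1, by omega⟩
              rw [Function.iterate_succ_apply] at hval
              exact Or.inr ⟨j, by omega, hval⟩

end main

end SpectralDecimationProof

/-- **Spectral decimation for the finite-level Laplacians** (Proposition 3.3):
`σ(Δ^(0)) = {0,2}` and for `n ≥ 1`,
`σ(Δ^(n)_p) = {0,2} ∪ ⋃_{i=0}^{n−1} (R_{Δ_p}^{∘i})^{−1}({p, 2−p})`. -/
theorem lapMatrix_spectrum (p : ℝ) (hp : p ∈ Set.Ioo (0 : ℝ) 1) :
    matSpec (lapMatrix p 0) = {0, 2} ∧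
    ∀ n : ℕ, 1 ≤ n →
      matSpec (lapMatrix p n)
        = ({0, 2} : Set ℂ) ∪ ⋃ i ∈ Finset.range n, (Rlap p)^[i] ⁻¹' {(p : ℂ), 2 - (p : ℂ)} := by
  constructor
  · rw [master hp 0]
    simp
  · intro n _
    exact master hp n
end
end

section
/- Let p ∈ (0,1), β ∈ ℝ and k ∈ {1,2}. Consider the 4×4 matrix H^(1)_{p,β,k/3,0} written in block form with respect to the ordering (0,3,1,2) of its index set: the top-left 2×2 block is T = β·I₂, the top-right block is B = [[−1,0],[0,−1]], the bottom-left block is C = [[p−1,0],[0,p−1]], and the bottom-right block is X₁ = [[−β/2, −p],[−p, −β/2]]. Then for every z ∈ ℂ with det(X₁ − z I₂) ≠ 0, the Schur complement satisfies T − z I₂ − B (X₁ − z I₂)^{−1} C = φ(z) Δ^(0) − ψ(z) I₂, where Δ^(0) = [[1,−1],[−1,1]], φ(z) = 4p(p−1)/(4p² − (β+2z)²) and ψ(z) = −(β² + 2βp + βz − 2pz − 2p − 2z² + 2)/(β + 2p + 2z). -/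
open MeasureTheory Filter Matrix Polynomial

noncomputable section

/-- The reordering `(0,3,1,2)` of the index set `{0,1,2,3}` of `H^(1)`. -/
def reord : Fin 4 → Fin (3 ^ 1 + 1) := ![0, 3, 1, 2]


lemma cos_two_pi_div_three : Real.cos (2*Real.pi/3) = -1/2 := by
  rw [show (2*Real.pi/3 : ℝ) = Real.pi - Real.pi/3 by ring, Real.cos_pi_sub,
    Real.cos_pi_div_three]; norm_num

lemma cosA (k : ℕ) (hk : k = 1 ∨ k = 2) (x : ℝ) (hx : x = 1 ∨ x = 2) :
    Real.cos (2*Real.pi*((k:ℝ)/3)*x + 0) = -1/2 := by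
  rcases hk with rfl | rfl <;> rcases hx with rfl | rfl
  · rw [show (2*Real.pi*(((1:ℕ):ℝ)/3)*1 + 0 : ℝ) = 2*Real.pi/3 by push_cast; ring,
      cos_two_pi_div_three]
  · rw [show (2*Real.pi*(((1:ℕ):ℝ)/3)*2 + 0 : ℝ) = 2*Real.pi - 2*Real.pi/3 by push_cast; ring,
      Real.cos_two_pi_sub, cos_two_pi_div_three]
  · rw [show (2*Real.pi*(((2:ℕ):ℝ)/3)*1 + 0 : ℝ) = 2*Real.pi - 2*Real.pi/3 by push_cast; ring,
      Real.cos_two_pi_sub, cos_two_pi_div_three]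
  · rw [show (2*Real.pi*(((2:ℕ):ℝ)/3)*2 + 0 : ℝ) = 2*Real.pi/3 + 2*Real.pi by push_cast; ring,
      Real.cos_add_two_pi, cos_two_pi_div_three]

lemma cosB (k : ℕ) (hk : k = 1 ∨ k = 2) :
    Real.cos (2*Real.pi*((k:ℝ)/3)*3 + 0) = 1 := by
  rcases hk with rfl | rfl
  · rw [show (2*Real.pi*(((1:ℕ):ℝ)/3)*3 + 0 : ℝ) = 2*Real.pi by push_cast; ring,
      Real.cos_two_pi]
  · rw [show (2*Real.pi*(((2:ℕ):ℝ)/3)*3 + 0 : ℝ) = 2*Real.pi + 2*Real.pi by push_cast; ring,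
      Real.cos_add_two_pi, Real.cos_two_pi]

lemma resid_one : resid 1 = 1 := by simp [resid]

lemma resid_two : resid 2 = 2 := by
  rw [resid, Nat.factorization_eq_zero_of_not_dvd (by norm_num)]; norm_num

/-- **Schur-complement computation for `H^(1)_{p,β,k/3,0}`** (Lemma 3.7): with respect to the
ordering `(0,3,1,2)` of the index set, `H^(1)_{p,β,k/3,0}` has the block form
`[[T, B],[C, X₁]]` with `T = β·I₂`, `B = −I₂`, `C = (p−1)·I₂`,
`X₁ = [[−β/2,−p],[−p,−β/2]]`, and for every `z` with `det(X₁ − z·I₂) ≠ 0` the Schur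
complement satisfies `T − z·I₂ − B (X₁ − z·I₂)⁻¹ C = φ(z) Δ^(0) − ψ(z) I₂`. -/
theorem ham_level_one_schur_complement (p β : ℝ) (hp : p ∈ Set.Ioo (0 : ℝ) 1)
    (k : ℕ) (hk : k = 1 ∨ k = 2)
    (T B C X₁ Δ0 : Matrix (Fin 2) (Fin 2) ℂ)
    (hT : T = (β : ℂ) • 1) (hB : B = !![-1, 0; 0, -1])
    (hC : C = !![(p : ℂ) - 1, 0; 0, (p : ℂ) - 1])
    (hX : X₁ = !![-(β : ℂ) / 2, -(p : ℂ); -(p : ℂ), -(β : ℂ) / 2])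
    (hΔ : Δ0 = !![1, -1; -1, 1]) :
    (∀ i j : Fin 2 ⊕ Fin 2,
      Matrix.fromBlocks T B C X₁ i j
        = hamMatrix p β ((k : ℝ) / 3) 0 1 (reord (finSumFinEquiv i)) (reord (finSumFinEquiv j))) ∧
    ∀ z : ℂ, (X₁ - z • 1).det ≠ 0 →
      T - z • 1 - B * (X₁ - z • 1)⁻¹ * C = phiFun p β z • Δ0 - psiFun p β z • 1 := by
  subst hT hB hC hX hΔ
  constructor
  · have E00 : reord (finSumFinEquiv (Sum.inl (0 : Fin 2) : Fin 2 ⊕ Fin 2)) = (0 : Fin (3^1+1)) := by decide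
    have E01 : reord (finSumFinEquiv (Sum.inl (1 : Fin 2) : Fin 2 ⊕ Fin 2)) = (3 : Fin (3^1+1)) := by decide
    have E10 : reord (finSumFinEquiv (Sum.inr (0 : Fin 2) : Fin 2 ⊕ Fin 2)) = (1 : Fin (3^1+1)) := by decide
    have E11 : reord (finSumFinEquiv (Sum.inr (1 : Fin 2) : Fin 2 ⊕ Fin 2)) = (2 : Fin (3^1+1)) := by decide
    have v0 : ((0 : Fin (3^1+1)) : ℕ) = 0 := rfl
    have v1 : ((1 : Fin (3^1+1)) : ℕ) = 1 := rfl
    have v2 : ((2 : Fin (3^1+1)) : ℕ) = 2 := rfl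
    have v3 : ((3 : Fin (3^1+1)) : ℕ) = 3 := rfl
    have c1 := cosA k hk 1 (Or.inl rfl)
    have c2 := cosA k hk 2 (Or.inr rfl)
    have c3 := cosB k hk
    have c3' : Real.cos (2*Real.pi*((k:ℝ)/3)*(((3^1 : ℕ)):ℝ) + 0) = 1 := by
      rw [show (((3^1 : ℕ)):ℝ) = 3 by norm_num]; exact c3
    rintro (i | i) (j | j) <;> revert i j <;> simp only [Fin.forall_fin_two] <;>
      refine ⟨⟨?_, ?_⟩, ?_, ?_⟩ <;>
      simp only [Matrix.fromBlocks_apply₁₁, Matrix.fromBlocks_apply₁₂,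
        Matrix.fromBlocks_apply₂₁, Matrix.fromBlocks_apply₂₂,
        E00, E01, E10, E11, hamMatrix, Matrix.of_apply, v0, v1, v2, v3,
        hop, resid_one, resid_two, Nat.cast_one, Nat.cast_ofNat, c1, c2, c3, c3'] <;>
      norm_num [Real.cos_zero, Matrix.smul_apply, Matrix.one_apply,
        Matrix.cons_val_zero, Matrix.cons_val_one, Matrix.head_cons] <;>
      push_cast <;> ring
  · intro z hz
    have hM : (!![-(β:ℂ) / 2, -(p:ℂ); -(p:ℂ), -(β:ℂ) / 2] - z • 1)
        = !![-(β:ℂ)/2 - z, -(p:ℂ); -(p:ℂ), -(β:ℂ)/2 - z] := by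
      ext i j
      fin_cases i <;> fin_cases j <;>
        simp [Matrix.sub_apply, Matrix.smul_apply, Matrix.one_apply]
    have hdet : (!![-(β:ℂ) / 2, -(p:ℂ); -(p:ℂ), -(β:ℂ) / 2] - z • 1).det
        = (-(β:ℂ)/2 - z) ^ 2 - (p:ℂ) ^ 2 := by
      rw [hM, Matrix.det_fin_two_of]; ring
    rw [hdet] at hz
    have h1 : (β:ℂ) + 2*z - 2*p ≠ 0 := fun h => hz (by linear_combination (((β:ℂ)+2*z+2*p)/4) * h)
    have h2 : (β:ℂ) + 2*z + 2*p ≠ 0 := fun h => hz (by linear_combination (((β:ℂ)+2*z-2*p)/4) * h)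
    have h4 : 4*(p:ℂ)^2 - ((β:ℂ)+2*z)^2 ≠ 0 := fun h => hz (by linear_combination (-1/4)*h)
    have h5 : (β:ℂ) + 2*(p:ℂ) + 2*z ≠ 0 := fun h => h2 (by linear_combination h)
    have h6 : (β:ℂ)*z*8 + (β:ℂ)^2*2 + (z^2*8 - (p:ℂ)^2*8) ≠ 0 := fun h =>
      hz (by linear_combination h/8)
    have hinv : (!![-(β:ℂ) / 2, -(p:ℂ); -(p:ℂ), -(β:ℂ) / 2] - z • 1)⁻¹
        = ((-(β:ℂ)/2 - z) ^ 2 - (p:ℂ) ^ 2)⁻¹ •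
            !![-(β:ℂ)/2 - z, (p:ℂ); (p:ℂ), -(β:ℂ)/2 - z] := by
      rw [Matrix.inv_def, hdet, hM, Matrix.adjugate_fin_two_of, Ring.inverse_eq_inv']
      norm_num
    rw [hinv]
    ext i j
    fin_cases i <;> fin_cases j <;>
      simp only [phiFun, psiFun, Matrix.sub_apply, Matrix.smul_apply, Matrix.mul_apply,
        Fin.sum_univ_two, Matrix.one_apply, Matrix.cons_val', Matrix.cons_val_zero,
        Matrix.cons_val_one, Matrix.head_cons, Matrix.head_fin_const, Matrix.empty_val',
        Matrix.cons_val_fin_one, smul_eq_mul, Fin.isValue, ite_true, ite_false,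
        if_true, if_false, one_ne_zero, zero_ne_one, mul_one, mul_zero, Fin.mk.injEq] <;> norm_num <;>
        simp only [show ((-(β:ℂ) / 2 - z) ^ 2 - (p:ℂ) ^ 2)
            = ((β:ℂ)+2*z-2*p)*((β:ℂ)+2*z+2*p)/4 from by ring, inv_div,
          show 4*(p:ℂ)^2 - ((β:ℂ)+2*z)^2 = -(((β:ℂ)+2*z-2*p)*((β:ℂ)+2*z+2*p)) from by ring] <;>
        field_simp [show (β:ℂ) + z*2 - 2*p ≠ 0 from fun h => h1 (by linear_combination h),
          show (β:ℂ) + z*2 + 2*p ≠ 0 from fun h => h2 (by linear_combination h),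
          show (β:ℂ) + 2*p + z*2 ≠ 0 from fun h => h5 (by linear_combination h)] <;> try ring
end
end

section
/- Let p ∈ (0,1), β ∈ ℝ and k ∈ {1,2}. For every z ∈ ℂ: z is an eigenvalue of the 4×4 matrix H^(1)_{p,β,k/3,0} or z ∈ {−β/2 − p, −β/2 + p} if and only if R_{p,β,k/3,0}(z) ∈ {0, 2}, where R_{p,β,k/3,0}(z) = (−β + 2p − 2z)(β² + 2βp + βz − 2pz − 2p − 2z² + 2)/(4p(1−p)). (Here {−β/2 − p, −β/2 + p} is exactly the set of eigenvalues of the Dirichlet matrix H^(1),D_{p,β,k/3,0} = [[−β/2, −p],[−p, −β/2]].) -/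
open MeasureTheory Filter Matrix Polynomial

noncomputable section

lemma cos_tp (k : ℕ) (hk : k = 1 ∨ k = 2) (x : ℕ) (hx : x = 1 ∨ x = 2) :
    Real.cos (2 * Real.pi * ((k : ℝ) / 3) * (x : ℝ) + 0) = -(1/2) := by
  rcases hk with rfl | rfl <;> rcases hx with rfl | rfl
  · have : 2 * Real.pi * (((1:ℕ) : ℝ) / 3) * ((1:ℕ) : ℝ) + 0 = Real.pi - Real.pi / 3 := by
      push_cast; ring
    rw [this, Real.cos_pi_sub, Real.cos_pi_div_three]
  · have : 2 * Real.pi * (((1:ℕ) : ℝ) / 3) * ((2:ℕ) : ℝ) + 0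
        = 2 * Real.pi - (Real.pi - Real.pi / 3) := by push_cast; ring
    rw [this, Real.cos_two_pi_sub, Real.cos_pi_sub, Real.cos_pi_div_three]
  · have : 2 * Real.pi * (((2:ℕ) : ℝ) / 3) * ((1:ℕ) : ℝ) + 0
        = 2 * Real.pi - (Real.pi - Real.pi / 3) := by push_cast; ring
    rw [this, Real.cos_two_pi_sub, Real.cos_pi_sub, Real.cos_pi_div_three]
  · have : 2 * Real.pi * (((2:ℕ) : ℝ) / 3) * ((2:ℕ) : ℝ) + 0
        = (Real.pi - Real.pi / 3) + 2 * Real.pi := by push_cast; ring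
    rw [this, Real.cos_add_two_pi, Real.cos_pi_sub, Real.cos_pi_div_three]

lemma cos_full (k : ℕ) (hk : k = 1 ∨ k = 2) :
    Real.cos (2 * Real.pi * ((k : ℝ) / 3) * (((3:ℕ) : ℝ)) + 0) = 1 := by
  rcases hk with rfl | rfl
  · have : 2 * Real.pi * (((1:ℕ) : ℝ) / 3) * (((3:ℕ)) : ℝ) + 0 = 2 * Real.pi := by
      push_cast; ring
    rw [this, Real.cos_two_pi]
  · have : 2 * Real.pi * (((2:ℕ) : ℝ) / 3) * (((3:ℕ)) : ℝ) + 0 = 2 * Real.pi + 2 * Real.pi := by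
      push_cast; ring
    rw [this, Real.cos_add_two_pi, Real.cos_two_pi]

lemma hamM_eq (p β : ℝ) (k : ℕ) (hk : k = 1 ∨ k = 2) :
    hamMatrix p β ((k : ℝ) / 3) 0 1 =
      !![(β : ℂ), -1, 0, 0;
         -(1 - (p : ℂ)), -(β : ℂ)/2, -(p : ℂ), 0;
         0, -(p : ℂ), -(β : ℂ)/2, -(1 - (p : ℂ));
         0, 0, -1, (β : ℂ)] := by
  have hv0 : ((0 : Fin (3^1+1)) : ℕ) = 0 := rfl
  have hv1 : ((1 : Fin (3^1+1)) : ℕ) = 1 := rfl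
  have hv2 : ((2 : Fin (3^1+1)) : ℕ) = 2 := rfl
  have hv3 : ((3 : Fin (3^1+1)) : ℕ) = 3 := rfl
  ext i j
  fin_cases i <;> fin_cases j <;>
    simp only [hamMatrix, Matrix.of_apply, hv0, hv1, hv2, hv3, Matrix.cons_val_zero,
      Matrix.cons_val_one, Matrix.cons_val_two, Matrix.cons_val_three, Matrix.head_cons,
      Matrix.vecTail, Matrix.vecHead, Function.comp] <;>
    norm_num [hop, resid_one, resid_two]
  · rw [show (2 * (Real.pi:ℂ) * ((k:ℂ)/3)) = ((2*Real.pi*((k:ℝ)/3)*((1:ℕ):ℝ) + 0 : ℝ) : ℂ) by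
      push_cast; ring, ← Complex.ofReal_cos, cos_tp k hk 1 (Or.inl rfl)]
    push_cast; ring
  · rw [show (2 * (Real.pi:ℂ) * ((k:ℂ)/3) * 2) = ((2*Real.pi*((k:ℝ)/3)*((2:ℕ):ℝ) + 0 : ℝ) : ℂ) by
      push_cast; ring, ← Complex.ofReal_cos, cos_tp k hk 2 (Or.inr rfl)]
    push_cast; ring
  · rw [show (2 * (Real.pi:ℂ) * ((k:ℂ)/3) * 3) = ((2*Real.pi*((k:ℝ)/3)*((3:ℕ):ℝ) + 0 : ℝ) : ℂ) by
      push_cast; ring, ← Complex.ofReal_cos, cos_full k hk]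
    push_cast; ring

lemma mem_matSpec_iff {n : ℕ} (M : Matrix (Fin n) (Fin n) ℂ) (z : ℂ) :
    z ∈ matSpec M ↔ (M - z • 1).det = 0 := by
  rw [← Matrix.exists_mulVec_eq_zero_iff]
  simp only [matSpec, Set.mem_setOf_eq]
  constructor
  · rintro ⟨v, hv, h⟩
    exact ⟨v, hv, by
      rw [Matrix.sub_mulVec, Matrix.smul_mulVec, Matrix.one_mulVec, h, sub_self]⟩
  · rintro ⟨v, hv, h⟩
    refine ⟨v, hv, ?_⟩
    rw [Matrix.sub_mulVec, Matrix.smul_mulVec, Matrix.one_mulVec, sub_eq_zero] at h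
    exact h

/-- The expanded characteristic polynomial of the level-1 AMO matrix. -/
def detPoly (p β : ℝ) (z : ℂ) : ℂ :=
  1 + -2*z^2 + z^4 + (β:ℂ)*z + -1*(β:ℂ)*z^3 + (β:ℂ)^2 + (-3/4)*(β:ℂ)^2*z^2
    + (1/2)*(β:ℂ)^3*z + (1/4)*(β:ℂ)^4 + -2*(p:ℂ) + 2*(p:ℂ)*z^2 + -1*(p:ℂ)*(β:ℂ)*z
    + -1*(p:ℂ)*(β:ℂ)^2 + (p:ℂ)^2 + -1*(p:ℂ)^2*z^2 + 2*(p:ℂ)^2*(β:ℂ)*z + -1*(p:ℂ)^2*(β:ℂ)^2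

lemma det4_eq (p β : ℝ) (k : ℕ) (hk : k = 1 ∨ k = 2) (z : ℂ) :
    (hamMatrix p β ((k : ℝ) / 3) 0 1 - z • 1).det = detPoly p β z := by
  rw [hamM_eq p β k hk]
  have h : (!![(β : ℂ), -1, 0, 0;
         -(1 - (p : ℂ)), -(β : ℂ)/2, -(p : ℂ), 0;
         0, -(p : ℂ), -(β : ℂ)/2, -(1 - (p : ℂ));
         0, 0, -1, (β : ℂ)]) - z • 1 =
      !![(β : ℂ) - z, -1, 0, 0;
         -(1 - (p : ℂ)), -(β : ℂ)/2 - z, -(p : ℂ), 0;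
         0, -(p : ℂ), -(β : ℂ)/2 - z, -(1 - (p : ℂ));
         0, 0, -1, (β : ℂ) - z] := by
    ext i j
    fin_cases i <;> fin_cases j <;> simp [Matrix.one_apply] <;> ring
  rw [h, Matrix.det_succ_row_zero]
  simp (config := { decide := true }) [Fin.sum_univ_succ, Matrix.det_fin_three,
    Matrix.submatrix_apply, Fin.succAbove]
  unfold detPoly
  ring

lemma det2_eq (p β : ℝ) (z : ℂ) :
    ((!![-(β : ℂ) / 2, -(p : ℂ); -(p : ℂ), -(β : ℂ) / 2]) - z • 1).det =
    (z - (-(β:ℂ)/2 - (p:ℂ))) * (z - (-(β:ℂ)/2 + (p:ℂ))) := by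
  simp [Matrix.det_fin_two, Matrix.one_apply]
  ring

/-- **Proposition 3.4 (4) for `n = 1`**: `z` is an eigenvalue of the `4×4` matrix
`H^(1)_{p,β,k/3,0}` or an exceptional point `z ∈ {−β/2−p, −β/2+p}` iff
`R_{p,β,k/3,0}(z) ∈ {0,2}`; moreover `{−β/2−p,−β/2+p}` is exactly the set of eigenvalues
of the Dirichlet matrix `H^(1),D = [[−β/2,−p],[−p,−β/2]]`. -/
theorem ham_level_one_preimage (p β : ℝ) (hp : p ∈ Set.Ioo (0 : ℝ) 1)
    (k : ℕ) (hk : k = 1 ∨ k = 2) :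
    (∀ z : ℂ,
      (z ∈ matSpec (hamMatrix p β ((k : ℝ) / 3) 0 1)
          ∨ z = -(β : ℂ) / 2 - (p : ℂ) ∨ z = -(β : ℂ) / 2 + (p : ℂ))
        ↔ (Ramo p β z = 0 ∨ Ramo p β z = 2)) ∧
    matSpec !![-(β : ℂ) / 2, -(p : ℂ); -(p : ℂ), -(β : ℂ) / 2]
      = {-(β : ℂ) / 2 - (p : ℂ), -(β : ℂ) / 2 + (p : ℂ)} := by
  have hp0 : (p : ℂ) ≠ 0 := Complex.ofReal_ne_zero.2 (ne_of_gt hp.1)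
  have hp1 : (1 - (p : ℂ)) ≠ 0 := by
    rw [sub_ne_zero]
    exact_mod_cast hp.2.ne'
  constructor
  · intro z
    set A : ℂ := -(β : ℂ) / 2 - (p : ℂ)
    set B : ℂ := -(β : ℂ) / 2 + (p : ℂ)
    have hden : (4 * (p:ℂ) * (1 - (p:ℂ))) ≠ 0 := by
      apply mul_ne_zero (mul_ne_zero (by norm_num) hp0) hp1
    have key : Ramo p β z * (Ramo p β z - 2) * (4 * (p:ℂ) * (1 - (p:ℂ)))^2
        = 16 * detPoly p β z * ((z - A) * (z - B)) := by
      unfold Ramo detPoly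
      field_simp
      ring
    have h1 : (Ramo p β z = 0 ∨ Ramo p β z = 2) ↔
        16 * detPoly p β z * ((z - A) * (z - B)) = 0 := by
      rw [← key]
      constructor
      · rintro (h | h) <;> rw [h] <;> ring
      · intro h
        rcases mul_eq_zero.1 h with h' | h'
        · rcases mul_eq_zero.1 h' with h'' | h''
          · exact Or.inl h''
          · exact Or.inr (by rwa [sub_eq_zero] at h'')
        · exact absurd h' (pow_ne_zero 2 hden)
    rw [mem_matSpec_iff, det4_eq p β k hk z, h1, mul_eq_zero, mul_eq_zero, mul_eq_zero,
      sub_eq_zero, sub_eq_zero]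
    constructor
    · rintro (h | h | h)
      · exact Or.inl (Or.inr h)
      · exact Or.inr (Or.inl h)
      · exact Or.inr (Or.inr h)
    · rintro ((h | h) | h | h)
      · exact absurd h (by norm_num)
      · exact Or.inl h
      · exact Or.inr (Or.inl h)
      · exact Or.inr (Or.inr h)
  · ext z
    rw [mem_matSpec_iff, det2_eq p β z]
    simp only [Set.mem_insert_iff, Set.mem_singleton_iff, mul_eq_zero, sub_eq_zero]
end
end

section
/- Let p ∈ (0,1), β ∈ ℝ, l ≥ 1, 1 ≤ n ≤ l and k ∈ {0,…,3^n − 1}. Then the (3^l+1)×(3^l+1) matrix H^(l)_{p,β,k/3^n,0} has exactly 3^l + 1 distinct eigenvalues; in particular all its eigenvalues are simple. -/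
open MeasureTheory Filter Matrix Polynomial

noncomputable section

lemma hop_succ_pos {p : ℝ} (hp0 : 0 < p) (hp1 : p < 1) (x : ℕ) : 0 < hop p x (x+1) := by
  unfold hop
  rw [if_pos rfl]
  split_ifs
  · norm_num
  · exact hp0
  · linarith

lemma hop_pred_pos {p : ℝ} (hp0 : 0 < p) (hp1 : p < 1) (x : ℕ) (hx : 1 ≤ x) :
    0 < hop p x (x-1) := by
  unfold hop
  rw [if_neg (by omega), if_pos (by omega)]
  split_ifs
  · linarith
  · exact hp0



lemma matSpec_conj_sub {m : ℕ} (A B T : Matrix (Fin m) (Fin m) ℂ) (hBA : B * A = 1) :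
    matSpec T ⊆ matSpec (A * T * B) := by
  rintro z ⟨v, hv, he⟩
  refine ⟨A *ᵥ v, fun h => hv ?_, ?_⟩
  · have : B *ᵥ (A *ᵥ v) = 0 := by rw [h, mulVec_zero]
    rwa [mulVec_mulVec, hBA, one_mulVec] at this
  · simp only [mulVec_mulVec]
    rw [mul_assoc (A*T) B A, hBA, mul_one, ← mulVec_mulVec, he, mulVec_smul]

lemma matSpec_conj {m : ℕ} (A B T : Matrix (Fin m) (Fin m) ℂ) (hAB : A * B = 1) (hBA : B * A = 1) :
    matSpec (A * T * B) = matSpec T := by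
  refine subset_antisymm ?_ (matSpec_conj_sub A B T hBA)
  have h2 : B * (A * T * B) * A = T := by
    simp only [Matrix.mul_assoc]
    rw [hBA, Matrix.mul_one, ← Matrix.mul_assoc, hBA, Matrix.one_mul]
  have := matSpec_conj_sub B A (A * T * B) hAB
  rwa [h2] at this

lemma matSpec_diagonal {m : ℕ} (d : Fin m → ℂ) : matSpec (diagonal d) = Set.range d := by
  ext z
  constructor
  · rintro ⟨v, hv, he⟩
    obtain ⟨i, hi⟩ := Function.ne_iff.mp hv
    have := congrFun he i
    rw [mulVec_diagonal] at this
    simp only [Pi.smul_apply, smul_eq_mul] at this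
    exact ⟨i, mul_right_cancel₀ hi this⟩
  · rintro ⟨j, rfl⟩
    refine ⟨Pi.single j 1, ?_, ?_⟩
    · simp [Function.ne_iff]
    · rw [diagonal_mulVec_single]
      ext x
      by_cases h : x = j <;> simp [h, Pi.single_apply]


lemma tridiag_vec_zero {N : ℕ} (T : Matrix (Fin (N+1)) (Fin (N+1)) ℂ)
    (hupper : ∀ i j : Fin (N+1), (i:ℕ)+1 < (j:ℕ) → T i j = 0)
    (hsup : ∀ i j : Fin (N+1), (j:ℕ) = (i:ℕ)+1 → T i j ≠ 0)
    {z : ℂ} {v : Fin (N+1) → ℂ} (hv : T *ᵥ v = z • v) (h0 : v 0 = 0) : v = 0 := by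
  have key : ∀ m : ℕ, ∀ h : m < N + 1, v ⟨m, h⟩ = 0 := by
    intro m
    induction m using Nat.strong_induction_on with
    | _ m ih =>
      intro h
      match m, h with
      | 0, h => exact h0
      | (m'+1), h =>
        have hm' : m' < N + 1 := by omega
        set i : Fin (N+1) := ⟨m', hm'⟩
        set jm : Fin (N+1) := ⟨m'+1, h⟩
        have hrow := congrFun hv i
        rw [mulVec, dotProduct] at hrow
        have hsum : ∑ j, T i j * v j = T i jm * v jm := by
          refine Finset.sum_eq_single jm ?_ (by simp)
          intro b _ hb
          rcases lt_trichotomy (b : ℕ) (m'+1) with hlt | heq | hgt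
          · have : v b = 0 := by
              have := ih (b : ℕ) (by omega) b.2
              rwa [Fin.eta] at this
            rw [this, mul_zero]
          · exact absurd (Fin.ext heq) hb
          · rw [hupper i b (by simp [i]; omega), zero_mul]
        have hvi : v i = 0 := ih m' (by omega) hm'
        rw [hsum] at hrow
        simp only [Pi.smul_apply, smul_eq_mul] at hrow
        rw [hvi, mul_zero] at hrow
        exact (mul_eq_zero.mp hrow).resolve_left (hsup i jm rfl)
  funext x
  have := key (x : ℕ) x.2
  rwa [Fin.eta] at this



noncomputable def wts (a b : ℕ → ℝ) : ℕ → ℝ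
  | 0 => 1
  | (i+1) => wts a b i * Real.sqrt (a i / b i)

lemma wts_pos {a b : ℕ → ℝ} (hab : ∀ i, 0 < a i * b i) : ∀ i, 0 < wts a b i := by
  intro i
  induction i with
  | zero => norm_num [wts]
  | succ i ih =>
    rw [wts]
    have hb : b i ≠ 0 := fun h => by simpa [h] using hab i
    have hq : 0 < a i / b i := by
      have h2 : a i / b i = (a i * b i) / (b i ^ 2) := by field_simp
      rw [h2]; exact div_pos (hab i) (by positivity)
    exact mul_pos ih (Real.sqrt_pos.mpr hq)

lemma wts_rel {a b : ℕ → ℝ} (hab : ∀ i, 0 < a i * b i) (i : ℕ) :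
    (wts a b (i+1))^2 * b i = (wts a b i)^2 * a i := by
  have hb : b i ≠ 0 := fun h => by simpa [h] using hab i
  have hq : 0 < a i / b i := by
    have h2 : a i / b i = (a i * b i) / (b i ^ 2) := by field_simp
    rw [h2]; exact div_pos (hab i) (by positivity)
  rw [wts, mul_pow, Real.sq_sqrt hq.le]
  field_simp

set_option maxHeartbeats 1000000 in
theorem tridiag_card {N : ℕ} (M : Matrix (Fin (N+1)) (Fin (N+1)) ℂ)
    (hreal : ∀ i j, (M i j).im = 0)
    (hzero : ∀ i j : Fin (N+1), (i:ℕ)+1 < (j:ℕ) ∨ (j:ℕ)+1 < (i:ℕ) → M i j = 0)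
    (hpos : ∀ i j : Fin (N+1), (j:ℕ) = (i:ℕ)+1 → 0 < (M i j).re * (M j i).re) :
    (matSpec M).ncard = N + 1 := by
  classical
  set da : ℕ → ℝ := fun i => if h : i < N then (M ⟨i, by omega⟩ ⟨i+1, by omega⟩).re else 1 with hda
  set db : ℕ → ℝ := fun i => if h : i < N then (M ⟨i+1, by omega⟩ ⟨i, by omega⟩).re else 1 with hdb
  have hab : ∀ i, 0 < da i * db i := by
    intro i
    by_cases h : i < N
    · simp only [hda, hdb, dif_pos h]
      exact hpos ⟨i, by omega⟩ ⟨i+1, by omega⟩ rfl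
    · simp [hda, hdb, dif_neg h]
  set w : ℕ → ℝ := wts da db with hw
  have hwpos : ∀ i, 0 < w i := wts_pos hab
  have hwne : ∀ i, ((w i : ℝ) : ℂ) ≠ 0 := fun i => Complex.ofReal_ne_zero.mpr (ne_of_gt (hwpos i))
  set D : Matrix (Fin (N+1)) (Fin (N+1)) ℂ := diagonal (fun i => ((w i : ℝ) : ℂ)) with hD
  set E : Matrix (Fin (N+1)) (Fin (N+1)) ℂ := diagonal (fun i => ((w i : ℝ) : ℂ)⁻¹) with hE
  have hDE : D * E = 1 := by
    rw [hD, hE, diagonal_mul_diagonal]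
    have : (fun i : Fin (N+1) => ((w i : ℝ):ℂ) * ((w i : ℝ):ℂ)⁻¹) = fun _ => (1:ℂ) :=
      funext fun i => mul_inv_cancel₀ (hwne i)
    rw [this, diagonal_one]
  have hED : E * D = 1 := by
    rw [hD, hE, diagonal_mul_diagonal]
    have : (fun i : Fin (N+1) => ((w i : ℝ):ℂ)⁻¹ * ((w i : ℝ):ℂ)) = fun _ => (1:ℂ) :=
      funext fun i => inv_mul_cancel₀ (hwne i)
    rw [this, diagonal_one]
  set S : Matrix (Fin (N+1)) (Fin (N+1)) ℂ := D * M * E with hS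
  have hSentry : ∀ i j, S i j = ((w (i:ℕ) : ℝ) : ℂ) * M i j * ((w (j:ℕ) : ℝ) : ℂ)⁻¹ := by
    intro i j
    rw [hS, hD, hE, Matrix.mul_diagonal, Matrix.diagonal_mul]
  have hMc : ∀ i j, (starRingEnd ℂ) (M i j) = M i j := fun i j =>
    Complex.conj_eq_iff_im.mpr (hreal i j)
  have hMre : ∀ i j, M i j = ((M i j).re : ℂ) := by
    intro i j
    apply Complex.ext <;> simp [hreal]
  have hsym : ∀ i j : Fin (N+1), (j:ℕ) = (i:ℕ)+1 →
      ((w (j:ℕ) : ℝ):ℂ) * M j i * ((w (i:ℕ) : ℝ):ℂ)⁻¹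
        = ((w (i:ℕ) : ℝ):ℂ) * M i j * ((w (j:ℕ) : ℝ):ℂ)⁻¹ := by
    intro i j hj
    have hiN : (i:ℕ) < N := by omega
    have hii : (⟨(i:ℕ), by omega⟩ : Fin (N+1)) = i := by apply Fin.ext; rfl
    have hjj : (⟨(i:ℕ)+1, by omega⟩ : Fin (N+1)) = j := by apply Fin.ext; simp [hj]
    have hia : M i j = ((da (i:ℕ) : ℝ) : ℂ) := by
      rw [hda]; simp only [dif_pos hiN, hii, hjj]; exact hMre i j
    have hib : M j i = ((db (i:ℕ) : ℝ) : ℂ) := by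
      rw [hdb]; simp only [dif_pos hiN, hii, hjj]; exact hMre j i
    have hrel := wts_rel hab (i:ℕ)
    have hrelC : ((w ((i:ℕ)+1) : ℝ):ℂ)^2 * ((db (i:ℕ) : ℝ):ℂ)
        = ((w (i:ℕ) : ℝ):ℂ)^2 * ((da (i:ℕ) : ℝ):ℂ) := by exact_mod_cast hrel
    rw [hia, hib, hj]
    field_simp [hwne (i:ℕ), hwne ((i:ℕ)+1)]
    linear_combination hrelC
  have hSH : S.IsHermitian := by
    rw [Matrix.IsHermitian]
    ext i j
    rw [Matrix.conjTranspose_apply, hSentry, hSentry]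
    have hstar : star (((w (j:ℕ) : ℝ):ℂ) * M j i * ((w (i:ℕ) : ℝ):ℂ)⁻¹)
        = ((w (j:ℕ) : ℝ):ℂ) * M j i * ((w (i:ℕ) : ℝ):ℂ)⁻¹ := by
      simp only [Complex.star_def, _root_.map_mul, map_inv₀, Complex.conj_ofReal, hMc]
    rw [hstar]
    rcases Nat.lt_trichotomy (i:ℕ) (j:ℕ) with h | h | h
    · by_cases h2 : (j:ℕ) = (i:ℕ)+1
      · exact hsym i j h2
      · rw [hzero j i (Or.inr (by omega)), hzero i j (Or.inl (by omega))]
        ring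
    · have : i = j := Fin.ext h
      subst this; rfl
    · by_cases h2 : (i:ℕ) = (j:ℕ)+1
      · exact (hsym j i h2).symm
      · rw [hzero j i (Or.inl (by omega)), hzero i j (Or.inr (by omega))]
        ring
  have hSupper : ∀ i j : Fin (N+1), (i:ℕ)+1 < (j:ℕ) → S i j = 0 := by
    intro i j h
    rw [hSentry, hzero i j (Or.inl h)]
    ring
  have hSsup : ∀ i j : Fin (N+1), (j:ℕ) = (i:ℕ)+1 → S i j ≠ 0 := by
    intro i j h
    have hMne : M i j ≠ 0 := by
      intro h0
      have := hpos i j h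
      rw [h0] at this
      simp at this
    rw [hSentry]
    exact mul_ne_zero (mul_ne_zero (hwne _) hMne) (inv_ne_zero (hwne _))
  -- similarity
  have hMS : matSpec M = matSpec S := (matSpec_conj D E M hDE hED).symm
  set Um : Matrix (Fin (N+1)) (Fin (N+1)) ℂ := (hSH.eigenvectorUnitary : Matrix (Fin (N+1)) (Fin (N+1)) ℂ) with hUm
  have hU1 : Um * star Um = 1 := Unitary.coe_mul_star_self _
  have hU2 : star Um * Um = 1 := Unitary.coe_star_mul_self _
  have hspec : matSpec S = Set.range (fun j => ((hSH.eigenvalues j : ℝ) : ℂ)) := by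
    conv_lhs => rw [hSH.spectral_theorem]
    rw [Unitary.conjStarAlgAut_apply, matSpec_conj _ _ _ hU1 hU2, matSpec_diagonal]
    rfl
  -- injectivity of eigenvalues
  have hinj : Function.Injective (fun j => ((hSH.eigenvalues j : ℝ) : ℂ)) := by
    intro i j hij
    by_contra hne
    set u : Fin (N+1) → ℂ := ⇑(hSH.eigenvectorBasis i) with hu
    set v : Fin (N+1) → ℂ := ⇑(hSH.eigenvectorBasis j) with hv
    have hui : S *ᵥ u = ((hSH.eigenvalues i : ℝ) : ℂ) • u := by
      rw [hu]
      rw [hSH.mulVec_eigenvectorBasis i]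
      funext x
      simp [Complex.real_smul]
    have hvj : S *ᵥ v = ((hSH.eigenvalues i : ℝ) : ℂ) • v := by
      rw [hv, hSH.mulVec_eigenvectorBasis j]
      have : hSH.eigenvalues j = hSH.eigenvalues i := by
        have h' : ((hSH.eigenvalues i : ℝ) : ℂ) = ((hSH.eigenvalues j : ℝ) : ℂ) := hij
        exact_mod_cast h'.symm
      rw [this]
      funext x
      simp [Complex.real_smul]
    -- basis vectors are nonzero in coordinate 0
    have hbne : ∀ k : Fin (N+1), ⇑(hSH.eigenvectorBasis k) ≠ 0 := by
      intro k h0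
      have : hSH.eigenvectorBasis k = 0 := by
        ext x
        exact congrFun h0 x
      have hne0 := hSH.eigenvectorBasis.toBasis.ne_zero k
      rw [OrthonormalBasis.coe_toBasis] at hne0
      exact hne0 this
    have hu0 : u 0 ≠ 0 := by
      intro h0
      exact hbne i (tridiag_vec_zero S hSupper hSsup hui h0)
    have hv0 : v 0 ≠ 0 := by
      intro h0
      exact hbne j (tridiag_vec_zero S hSupper hSsup hvj h0)
    -- q := u 0 • v - v 0 • u is an eigenvector vanishing at 0
    set q : Fin (N+1) → ℂ := u 0 • v - v 0 • u with hq
    have hqe : S *ᵥ q = ((hSH.eigenvalues i : ℝ) : ℂ) • q := by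
      rw [hq, mulVec_sub, mulVec_smul, mulVec_smul, hui, hvj]
      rw [smul_sub]
      rw [smul_comm (u 0), smul_comm (v 0)]
    have hq0 : q 0 = 0 := by
      show u 0 * v 0 - v 0 * u 0 = 0
      ring
    have hqz : q = 0 := tridiag_vec_zero S hSupper hSsup hqe hq0
    have hvu : u 0 • v = v 0 • u := by
      have := sub_eq_zero.mp hqz
      exact this
    -- contradict orthogonality
    have horth : inner ℂ (hSH.eigenvectorBasis i) (hSH.eigenvectorBasis j) = (0 : ℂ) :=
      hSH.eigenvectorBasis.orthonormal.2 hne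
    rw [PiLp.inner_apply] at horth
    have hsum : ∑ k, (starRingEnd ℂ) (u k) * v k = 0 := by simpa only [RCLike.inner_apply'] using horth
    have hvk : ∀ k, v k = (u 0)⁻¹ * (v 0 * u k) := by
      intro k
      have h := congrFun hvu k
      simp only [Pi.smul_apply, smul_eq_mul] at h
      rw [← h]
      field_simp
    have hself : ∑ k, (starRingEnd ℂ) (u k) * u k
        = inner ℂ (hSH.eigenvectorBasis i) (hSH.eigenvectorBasis i) := by
      rw [PiLp.inner_apply]
      simp only [RCLike.inner_apply']
      rfl
    have hsum2 : (u 0)⁻¹ * v 0 * ∑ k, (starRingEnd ℂ) (u k) * u k = 0 := by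
      rw [Finset.mul_sum, ← hsum]
      congr 1
      funext k
      rw [hvk k]
      ring
    have hbine : (inner ℂ (hSH.eigenvectorBasis i) (hSH.eigenvectorBasis i) : ℂ) ≠ 0 := by
      rw [inner_self_ne_zero]
      have hne0 := hSH.eigenvectorBasis.toBasis.ne_zero i
      rwa [OrthonormalBasis.coe_toBasis] at hne0
    rw [hself] at hsum2
    rcases mul_eq_zero.mp hsum2 with h | h
    · rcases mul_eq_zero.mp h with h' | h'
      · exact hu0 (by simpa using inv_eq_zero.mp h')
      · exact hv0 h'
    · exact hbine h
  rw [hMS, hspec, ← Set.image_univ, Set.ncard_image_of_injective _ hinj, Set.ncard_univ,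
    Nat.card_eq_fintype_card, Fintype.card_fin]

/-- For `1 ≤ n ≤ l` and `k ∈ {0,…,3^n−1}`, the `(3^l+1)×(3^l+1)` matrix
`H^(l)_{p,β,k/3^n,0}` has exactly `3^l + 1` distinct eigenvalues; in particular all its
eigenvalues are simple. -/
theorem ham_finite_simple_spectrum (p β : ℝ) (hp : p ∈ Set.Ioo (0 : ℝ) 1)
    (l n : ℕ) (hn : 1 ≤ n) (hnl : n ≤ l) (k : ℕ) (hk : k < 3 ^ n) :
    (matSpec (hamMatrix p β ((k : ℝ) / 3 ^ n) 0 l)).ncard = 3 ^ l + 1 := by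
  obtain ⟨hp0, hp1⟩ := hp
  apply tridiag_card
  · intro i j
    simp only [hamMatrix, Matrix.of_apply]
    split_ifs <;> first | exact Complex.ofReal_im _ | simp
  · intro i j hadj
    have hx := i.2
    have hy := j.2
    simp only [hamMatrix, Matrix.of_apply]
    split_ifs <;> first | rfl | omega
  · intro i j hj
    have key : ∀ x y : Fin (3^l+1), ((y:ℕ) = (x:ℕ)+1 ∨ (x:ℕ) = (y:ℕ)+1) →
        ∃ c : ℝ, 0 < c ∧ hamMatrix p β ((k:ℝ)/3^n) 0 l x y = ((-c : ℝ) : ℂ) := by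
      intro x y hxy
      have hx := x.2
      have hy := y.2
      simp only [hamMatrix, Matrix.of_apply]
      split_ifs
      · omega
      · exact ⟨1, one_pos, by norm_num⟩
      · omega
      · omega
      · exact ⟨1, one_pos, by norm_num⟩
      · omega
      · omega
      · exact ⟨hop p ↑x (↑x - 1), hop_pred_pos hp0 hp1 _ (by omega), by push_cast; ring⟩
      · exact ⟨hop p ↑x (↑x + 1), hop_succ_pos hp0 hp1 _, by push_cast; ring⟩
      · omega
    obtain ⟨c, hc, hcv⟩ := key i j (Or.inl hj)
    obtain ⟨d, hd, hdv⟩ := key j i (Or.inr hj)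
    rw [hcv, hdv]
    simp only [Complex.ofReal_re]
    nlinarith
end
end
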